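/- arXiv:1009.2882 — 9 statements merged into one kernel-verified Lean document; each statement's English description precedes it below -/
import Mathlib

section
/- Let T > 0 and let v ∈ H^1(0,T) with v(0) = v(T) = 0, v not identically zero, and suppose there exist points 0 < x₁ < x₂ < x₃ < T with v(x₁) = max v, v(x₂) = 0, v(x₃) = min v, and max v = -min v = ‖v‖_∞. Then ∫₀ᵀ v'(t)² dt ≥ (16/T)·‖v‖_∞². -/
open Set MeasureTheory intervalIntegral

/-- Cauchy–Schwarz on an interval. -/
lemma cs_interval {a b : ℝ} (hab : a < b) (f : ℝ → ℝ)
    (hf : IntervalIntegrable f volume a b)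
    (hf2 : IntervalIntegrable (fun t => f t ^ 2) volume a b) :
    (∫ t in a..b, f t) ^ 2 ≤ (b - a) * ∫ t in a..b, f t ^ 2 := by
  set I := ∫ t in a..b, f t with hI
  set J := ∫ t in a..b, f t ^ 2 with hJ
  have hnn : 0 ≤ ∫ t in a..b, ((b - a) * f t - I) ^ 2 :=
    intervalIntegral.integral_nonneg hab.le fun _ _ => sq_nonneg _
  have hexp : ∫ t in a..b, ((b - a) * f t - I) ^ 2
      = (b - a) ^ 2 * J - (2 * (b - a) * I) * I + I ^ 2 * (b - a) := by
    have h1 : ∀ t, ((b - a) * f t - I) ^ 2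
        = (b - a) ^ 2 * f t ^ 2 - (2 * (b - a) * I) * f t + I ^ 2 := by
      intro t; ring
    simp_rw [h1]
    rw [intervalIntegral.integral_add (((hf2.const_mul _).sub (hf.const_mul _)))
        intervalIntegrable_const,
      intervalIntegral.integral_sub (hf2.const_mul _) (hf.const_mul _),
      intervalIntegral.integral_const_mul, intervalIntegral.integral_const_mul,
      intervalIntegral.integral_const]
    simp [← hI, ← hJ]; ring
  rw [hexp] at hnn
  nlinarith [hab]

lemma amhm {a b : ℝ} (ha : 0 < a) (hb : 0 < b) : 4 / (a + b) ≤ 1 / a + 1 / b := by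
  rw [div_add_div _ _ ha.ne' hb.ne', div_le_div_iff₀ (by positivity) (by positivity)]
  nlinarith [sq_nonneg (a - b)]

theorem stmt0 (T : ℝ) (hT : 0 < T) (v v' : ℝ → ℝ) (M : ℝ)
    (hderiv : ∀ t ∈ Set.Icc (0:ℝ) T, HasDerivWithinAt v (v' t) (Set.Icc 0 T) t)
    (hint : IntervalIntegrable (fun t => (v' t) ^ 2) MeasureTheory.volume 0 T)
    (hv0 : v 0 = 0) (hvT : v T = 0)
    (hne : ∃ t ∈ Set.Icc (0:ℝ) T, v t ≠ 0)
    (hbd : ∀ t ∈ Set.Icc (0:ℝ) T, |v t| ≤ M)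
    (x₁ x₂ x₃ : ℝ) (h01 : 0 < x₁) (h12 : x₁ < x₂) (h23 : x₂ < x₃) (h3T : x₃ < T)
    (hmax : v x₁ = M) (hzero : v x₂ = 0) (hmin : v x₃ = -M) :
    (16 / T) * M ^ 2 ≤ ∫ t in (0:ℝ)..T, (v' t) ^ 2 := by
  -- v' agrees with the measurable function derivWithin v (Ici ·) on [0, T)
  set g : ℝ → ℝ := fun t => derivWithin v (Set.Ici t) t with hg
  have hgmeas : Measurable g := measurable_derivWithin_Ici v
  have hagree : ∀ t ∈ Set.Ico (0:ℝ) T, v' t = g t := by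
    intro t ht
    have h1 : HasDerivWithinAt v (v' t) (Set.Icc t T) t :=
      (hderiv t ⟨ht.1, ht.2.le⟩).mono (Set.Icc_subset_Icc_left ht.1)
    have h2 : HasDerivWithinAt v (v' t) (Set.Ici t) t := by
      rw [← Set.Ici_inter_Iic] at h1
      exact (hasDerivWithinAt_inter (Iic_mem_nhds ht.2)).mp h1
    exact (h2.derivWithin (uniqueDiffOn_Ici t t Set.self_mem_Ici)).symm
  -- interval integrability of v' on subintervals of [0,T]
  have hvint : ∀ a b : ℝ, 0 ≤ a → a ≤ b → b ≤ T →
      IntervalIntegrable v' volume a b := by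
    intro a b ha hab hbT
    rw [intervalIntegrable_iff_integrableOn_Ioc_of_le hab]
    have hsub : Set.Ioc a b ⊆ Set.Ioc 0 T := Set.Ioc_subset_Ioc ha hbT
    have hmeas : AEStronglyMeasurable v' (volume.restrict (Set.Ioc a b)) := by
      refine hgmeas.aestronglyMeasurable.congr ?_
      have hT0 : (volume : Measure ℝ) {T} = 0 := measure_singleton T
      have hae : ∀ᵐ t ∂(volume.restrict (Set.Ioc a b)), t ≠ T :=
        ae_restrict_of_ae (by
          rw [ae_iff]
          convert hT0 using 2
          ext t; simp)
      filter_upwards [ae_restrict_mem measurableSet_Ioc, hae] with t ht htT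
      exact (hagree t ⟨ha.trans ht.1.le, lt_of_le_of_ne (hsub ht).2 htT⟩).symm
    have hsq : IntegrableOn (fun t => (v' t) ^ 2) (Set.Ioc a b) volume :=
      ((intervalIntegrable_iff_integrableOn_Ioc_of_le hT.le).mp hint).mono_set hsub
    refine Integrable.mono' ((integrable_const (1:ℝ)).add hsq) hmeas ?_
    refine Filter.Eventually.of_forall fun t => ?_
    have : |v' t| ≤ 1 + (v' t) ^ 2 := by nlinarith [sq_abs (v' t), sq_nonneg (|v' t| - 1)]
    simpa [Real.norm_eq_abs] using this
  -- FTC on subintervals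
  have hftc : ∀ a b : ℝ, 0 ≤ a → a ≤ b → b ≤ T →
      ∫ t in a..b, v' t = v b - v a := by
    intro a b ha hab hbT
    refine integral_eq_sub_of_hasDeriv_right_of_le hab ?_ ?_ (hvint a b ha hab hbT)
    · intro t ht
      exact ((hderiv t ⟨ha.trans ht.1, ht.2.trans hbT⟩).continuousWithinAt).mono
        (Set.Icc_subset_Icc ha hbT)
    · intro x hx
      have h1 : HasDerivWithinAt v (v' x) (Set.Ioc x T) x :=
        (hderiv x ⟨(ha.trans hx.1.le), (hx.2.le.trans hbT)⟩).mono
          (fun y hy => ⟨(ha.trans hx.1.le).trans hy.1.le, hy.2⟩)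
      rw [← Set.Ioi_inter_Iic] at h1
      exact (hasDerivWithinAt_inter (Iic_mem_nhds (hx.2.trans_le hbT))).mp h1
  -- Cauchy–Schwarz estimate on subintervals
  have key : ∀ a b : ℝ, 0 ≤ a → a < b → b ≤ T →
      (v b - v a) ^ 2 / (b - a) ≤ ∫ t in a..b, (v' t) ^ 2 := by
    intro a b ha hab hbT
    have h2 : IntervalIntegrable (fun t => (v' t) ^ 2) volume a b :=
      hint.mono_set (by
        rw [Set.uIcc_of_le hab.le, Set.uIcc_of_le hT.le]
        exact Set.Icc_subset_Icc ha hbT)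
    have := cs_interval hab v' (hvint a b ha hab.le hbT) h2
    rw [hftc a b ha hab.le hbT] at this
    rw [div_le_iff₀ (by linarith)]
    linarith [this]
  -- split the integral
  have hi1 : IntervalIntegrable (fun t => (v' t) ^ 2) volume 0 x₁ :=
    hint.mono_set (by rw [Set.uIcc_of_le (by linarith), Set.uIcc_of_le hT.le]; exact Set.Icc_subset_Icc le_rfl (by linarith))
  have hi2 : IntervalIntegrable (fun t => (v' t) ^ 2) volume x₁ x₂ :=
    hint.mono_set (by rw [Set.uIcc_of_le (by linarith), Set.uIcc_of_le hT.le]; exact Set.Icc_subset_Icc (by linarith) (by linarith))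
  have hi3 : IntervalIntegrable (fun t => (v' t) ^ 2) volume x₂ x₃ :=
    hint.mono_set (by rw [Set.uIcc_of_le (by linarith), Set.uIcc_of_le hT.le]; exact Set.Icc_subset_Icc (by linarith) (by linarith))
  have hi4 : IntervalIntegrable (fun t => (v' t) ^ 2) volume x₃ T :=
    hint.mono_set (by rw [Set.uIcc_of_le (by linarith), Set.uIcc_of_le hT.le]; exact Set.Icc_subset_Icc (by linarith) le_rfl)
  have hsplit : ∫ t in (0:ℝ)..T, (v' t) ^ 2
      = (∫ t in (0:ℝ)..x₁, (v' t) ^ 2) + (∫ t in x₁..x₂, (v' t) ^ 2)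
        + (∫ t in x₂..x₃, (v' t) ^ 2) + (∫ t in x₃..T, (v' t) ^ 2) := by
    have A := (intervalIntegral.integral_add_adjacent_intervals hi1 hi2).symm
    have B := (intervalIntegral.integral_add_adjacent_intervals (hi1.trans hi2) hi3).symm
    have C := (intervalIntegral.integral_add_adjacent_intervals ((hi1.trans hi2).trans hi3) hi4).symm
    rw [C, B, A]
  have k1 := key 0 x₁ le_rfl h01 (by linarith)
  have k2 := key x₁ x₂ h01.le h12 (by linarith)
  have k3 := key x₂ x₃ (by linarith) h23 (by linarith)
  have k4 := key x₃ T (by linarith) h3T le_rfl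
  rw [hv0, hmax, sub_zero] at k1
  rw [hmax, hzero, zero_sub] at k2
  rw [hzero, hmin, sub_zero] at k3
  rw [hmin, hvT, sub_neg_eq_add, zero_add] at k4
  rw [hsplit]
  have e2 : (-M) ^ 2 = M ^ 2 := by ring
  rw [e2] at k2 k3
  -- AM-HM: 1/x₁ + 1/(x₂-x₁) + 1/(x₃-x₂) + 1/(T-x₃) ≥ 16/T
  have h12' : (0:ℝ) < x₂ - x₁ := by linarith
  have h23' : (0:ℝ) < x₃ - x₂ := by linarith
  have h3T' : (0:ℝ) < T - x₃ := by linarith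
  have hM2 : (0:ℝ) ≤ M ^ 2 := sq_nonneg M
  have a1 := amhm h01 h12'
  have a2 := amhm h23' h3T'
  have a3 := amhm (by linarith : (0:ℝ) < x₁ + (x₂ - x₁)) (by linarith : (0:ℝ) < (x₃ - x₂) + (T - x₃))
  have hsum : 16 / T ≤ 1 / x₁ + 1 / (x₂ - x₁) + 1 / (x₃ - x₂) + 1 / (T - x₃) := by
    have e1 : x₁ + (x₂ - x₁) + ((x₃ - x₂) + (T - x₃)) = T := by ring
    have h4 : 4 / (x₁ + (x₂ - x₁)) + 4 / ((x₃ - x₂) + (T - x₃)) ≥ 16 / T := by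
      have := amhm (by linarith : (0:ℝ) < x₁ + (x₂ - x₁)) (by linarith : (0:ℝ) < (x₃ - x₂) + (T - x₃))
      calc 16 / T = 4 * (4 / (x₁ + (x₂ - x₁) + ((x₃ - x₂) + (T - x₃)))) := by rw [e1]; ring
        _ ≤ 4 * (1 / (x₁ + (x₂ - x₁)) + 1 / ((x₃ - x₂) + (T - x₃))) := by linarith
        _ = 4 / (x₁ + (x₂ - x₁)) + 4 / ((x₃ - x₂) + (T - x₃)) := by ring
    linarith
  have hfin : (16 / T) * M ^ 2 ≤ (1 / x₁ + 1 / (x₂ - x₁) + 1 / (x₃ - x₂) + 1 / (T - x₃)) * M ^ 2 :=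
    mul_le_mul_of_nonneg_right hsum hM2
  have hd1 : M ^ 2 / x₁ = 1 / x₁ * M ^ 2 := by ring
  calc (16 / T) * M ^ 2
      ≤ (1 / x₁ + 1 / (x₂ - x₁) + 1 / (x₃ - x₂) + 1 / (T - x₃)) * M ^ 2 := hfin
    _ = M ^ 2 / (x₁ - 0) + M ^ 2 / (x₂ - x₁) + M ^ 2 / (x₃ - x₂) + M ^ 2 / (T - x₃) := by ring
    _ ≤ _ := by linarith [k1, k2, k3, k4]
end

section
/- Let T > 0 and define X₁^per = { v ∈ H^1(0,T) : v(0) = v(T), max_{[0,T]} v + min_{[0,T]} v = 0 }. Then for every nonzero v ∈ X₁^per, ∫₀ᵀ v'(t)² dt ≥ (16/T)·‖v‖_∞², i.e. the infimum of I₁(v) = (∫₀ᵀ v'²)/‖v‖_∞² over X₁^per \ {0} is at least 16/T. -/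
/-!
Let `v` attain its maximum `M` at `a` and its minimum `-M` at `b`. The points `a` and `b` cut the
circle `ℝ / Tℤ` into two arcs of lengths `L₁ + L₂ = T`, on each of which `v` changes by `2M`.
Cauchy–Schwarz on an arc gives `(2M)² ≤ Lᵢ ∫ v'²` over it, and adding the two estimates in the
form `(x + y)² ≤ (p + q)(A + B)` yields `(4M)² ≤ T ∫₀ᵀ v'²`.
-/

open MeasureTheory Set

lemma sq_add_le_add_mul_add {p q A B x y : ℝ} (hp : 0 ≤ p) (hq : 0 ≤ q) (hA : 0 ≤ A) (hB : 0 ≤ B)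
    (hx : x ^ 2 ≤ p * A) (hy : y ^ 2 ≤ q * B) : (x + y) ^ 2 ≤ (p + q) * (A + B) := by
  have hxy : (2 * x * y) ^ 2 ≤ (p * B + q * A) ^ 2 := by
    nlinarith [mul_le_mul hx hy (sq_nonneg y) (mul_nonneg hp hA), sq_nonneg (p * B - q * A)]
  linarith [(abs_le_of_sq_le_sq' hxy (by positivity)).2]

lemma sq_intervalIntegral_le_mul_integral_sq {f : ℝ → ℝ} {x y : ℝ} (hxy : x ≤ y)
    (hf : IntervalIntegrable f volume x y)
    (hf2 : IntervalIntegrable (fun t => f t ^ 2) volume x y) :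
    (∫ t in x..y, f t) ^ 2 ≤ (y - x) * ∫ t in x..y, f t ^ 2 := by
  rcases hxy.eq_or_lt with rfl | hlt
  · simp
  set L := y - x
  set I := ∫ t in x..y, f t
  -- expand `0 ≤ ∫ (L f - I)² = L (L ∫ f² - I²)`
  have hvar : (0 : ℝ) ≤ ∫ t in x..y, (L * f t - I) ^ 2 :=
    intervalIntegral.integral_nonneg hxy fun t _ => sq_nonneg _
  have hexpand : ∀ t, (L * f t - I) ^ 2 = L ^ 2 * f t ^ 2 - 2 * L * I * f t + I ^ 2 := by
    intro t; ring
  simp_rw [hexpand] at hvar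
  rw [intervalIntegral.integral_add ((hf2.const_mul _).sub (hf.const_mul _))
      intervalIntegrable_const, intervalIntegral.integral_sub (hf2.const_mul _) (hf.const_mul _),
    intervalIntegral.integral_const_mul, intervalIntegral.integral_const_mul,
    intervalIntegral.integral_const, smul_eq_mul] at hvar
  have hL : 0 < L := sub_pos.mpr hlt
  nlinarith

lemma intervalIntegrable_of_hasDerivAt_of_integrable_sq {f f' : ℝ → ℝ} {x y : ℝ} (hxy : x ≤ y)
    (hderiv : ∀ t ∈ Ioo x y, HasDerivAt f (f' t) t)
    (hf2 : IntervalIntegrable (fun t => f' t ^ 2) volume x y) :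
    IntervalIntegrable f' volume x y := by
  rw [intervalIntegrable_iff_integrableOn_Ioc_of_le hxy] at hf2 ⊢
  -- `f'` agrees a.e. with the measurable function `deriv f`
  have hmeas : AEStronglyMeasurable f' (volume.restrict (Ioc x y)) := by
    rw [← Measure.restrict_congr_set Ioo_ae_eq_Ioc]
    exact (measurable_deriv f).aestronglyMeasurable.congr
      ((ae_restrict_mem measurableSet_Ioo).mono fun t ht => (hderiv t ht).deriv)
  exact ((memLp_two_iff_integrable_sq hmeas).2 hf2).integrable one_le_two

lemma sq_sub_le_mul_integral_deriv_sq {f f' : ℝ → ℝ} {x y : ℝ} (hxy : x ≤ y)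
    (hcont : ContinuousOn f (Icc x y)) (hderiv : ∀ t ∈ Ioo x y, HasDerivAt f (f' t) t)
    (hf2 : IntervalIntegrable (fun t => f' t ^ 2) volume x y) :
    (f y - f x) ^ 2 ≤ (y - x) * ∫ t in x..y, f' t ^ 2 := by
  have hf' := intervalIntegrable_of_hasDerivAt_of_integrable_sq hxy hderiv hf2
  rw [← intervalIntegral.integral_eq_sub_of_hasDerivAt_of_le hxy hcont hderiv hf']
  exact sq_intervalIntegral_le_mul_integral_sq hxy hf' hf2

lemma four_mul_sq_sub_le_mul_integral_deriv_sq {f f' : ℝ → ℝ} {T u w : ℝ}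
    (hu : u ∈ Icc 0 T) (hw : w ∈ Icc 0 T) (hper : f 0 = f T)
    (hcont : ContinuousOn f (Icc 0 T)) (hderiv : ∀ t ∈ Ioo 0 T, HasDerivAt f (f' t) t)
    (hf2 : IntervalIntegrable (fun t => f' t ^ 2) volume 0 T) :
    4 * (f w - f u) ^ 2 ≤ T * ∫ t in (0:ℝ)..T, f' t ^ 2 := by
  wlog huw : u ≤ w generalizing u w
  · rw [← neg_sub, neg_sq]
    exact this hw hu (le_of_not_ge huw)
  have hpiece : ∀ x y, 0 ≤ x → x ≤ y → y ≤ T →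
      IntervalIntegrable (fun t => f' t ^ 2) volume x y ∧
      (f y - f x) ^ 2 ≤ (y - x) * ∫ t in x..y, f' t ^ 2 := by
    intro x y hx hxy hyT
    have hf2' := hf2.mono_set <| by
      rw [uIcc_of_le hxy, uIcc_of_le (hx.trans (hxy.trans hyT))]; exact Icc_subset_Icc hx hyT
    exact ⟨hf2', sq_sub_le_mul_integral_deriv_sq hxy
      (hcont.mono (Icc_subset_Icc hx hyT))
      (fun t ht => hderiv t (Ioo_subset_Ioo hx hyT ht)) hf2'⟩
  obtain ⟨hi₁, hA⟩ := hpiece 0 u le_rfl hu.1 hu.2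
  obtain ⟨hi₂, hB⟩ := hpiece u w hu.1 huw hw.2
  obtain ⟨hi₃, hC⟩ := hpiece w T hw.1 hw.2 le_rfl
  have hsplit : ∫ t in (0:ℝ)..T, f' t ^ 2 =
      (∫ t in (0:ℝ)..u, f' t ^ 2) + (∫ t in u..w, f' t ^ 2) + ∫ t in w..T, f' t ^ 2 := by
    rw [intervalIntegral.integral_add_adjacent_intervals hi₁ hi₂,
      intervalIntegral.integral_add_adjacent_intervals (hi₁.trans hi₂) hi₃]
  have hnonneg : ∀ x y, x ≤ y → 0 ≤ ∫ t in x..y, f' t ^ 2 := fun x y hxy =>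
    intervalIntegral.integral_nonneg hxy fun t _ => sq_nonneg _
  -- by periodicity, `[w, T] ∪ [0, u]` is an arc from `w` to `u` of length `T - (w - u)`
  have harc := sq_add_le_add_mul_add (by linarith [hw.2]) hu.1 (hnonneg _ _ hw.2)
    (hnonneg _ _ hu.1) hC (by simpa using hA)
  rw [← hper, show (f 0 - f w + (f u - f 0)) ^ 2 = (f w - f u) ^ 2 by ring] at harc
  have := sq_add_le_add_mul_add (by linarith [hw.2, hu.1]) (by linarith)
    (add_nonneg (hnonneg _ _ hw.2) (hnonneg _ _ hu.1)) (hnonneg _ _ huw) harc hB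
  rw [hsplit]
  linarith

theorem stmt2_general (T : ℝ) (hT : 0 < T) (v v' : ℝ → ℝ) (M m : ℝ)
    (hderiv : ∀ t ∈ Set.Icc (0:ℝ) T, HasDerivWithinAt v (v' t) (Set.Icc 0 T) t)
    (hint : IntervalIntegrable (fun t => (v' t) ^ 2) MeasureTheory.volume 0 T)
    (hper : v 0 = v T)
    (hmax : IsGreatest (v '' Set.Icc 0 T) M)
    (hmin : IsLeast (v '' Set.Icc 0 T) m)
    (hsum : M + m = 0) :
    (16 / T) * M ^ 2 ≤ ∫ t in (0:ℝ)..T, (v' t) ^ 2 := by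
  obtain ⟨a, ha, hva⟩ := hmax.1
  obtain ⟨b, hb, hvb⟩ := hmin.1
  have hcont : ContinuousOn v (Icc 0 T) := fun t ht => (hderiv t ht).continuousWithinAt
  have hderivAt : ∀ t ∈ Ioo 0 T, HasDerivAt v (v' t) t := fun t ht =>
    (hderiv t (Ioo_subset_Icc_self ht)).hasDerivAt (Icc_mem_nhds ht.1 ht.2)
  have hosc := four_mul_sq_sub_le_mul_integral_deriv_sq hb ha hper hcont hderivAt hint
  rw [hva, hvb, show m = -M by linarith] at hosc
  rw [div_mul_eq_mul_div, div_le_iff₀ hT]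
  linarith

theorem stmt2 (T : ℝ) (hT : 0 < T) (v v' : ℝ → ℝ) (M m : ℝ)
    (hderiv : ∀ t ∈ Set.Icc (0:ℝ) T, HasDerivWithinAt v (v' t) (Set.Icc 0 T) t)
    (hint : IntervalIntegrable (fun t => (v' t) ^ 2) MeasureTheory.volume 0 T)
    (hper : v 0 = v T)
    (hmax : IsGreatest (v '' Set.Icc 0 T) M)
    (hmin : IsLeast (v '' Set.Icc 0 T) m)
    (hsum : M + m = 0)
    (hne : ∃ t ∈ Set.Icc (0:ℝ) T, v t ≠ 0) :
    (16 / T) * M ^ 2 ≤ ∫ t in (0:ℝ)..T, (v' t) ^ 2 :=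
  stmt2_general T hT v v' M m hderiv hint hper hmax hmin hsum
end

section
/- Let T > 0 and define w : [0,T] → ℝ by w(x) = x for 0 ≤ x ≤ T/4, w(x) = -(x - T/2) for T/4 ≤ x ≤ 3T/4, and w(x) = x - T for 3T/4 ≤ x ≤ T. Then w ∈ H^1(0,T), w(0) = w(T) = 0, max w + min w = 0, and ∫₀ᵀ w'(x)² dx = (16/T)·‖w‖_∞². -/
open Set Topology

namespace TentWave

variable {T x : ℝ}

noncomputable def tentWave (T x : ℝ) : ℝ :=
  if x ≤ T / 4 then x else if x ≤ 3 * T / 4 then T / 2 - x else x - T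

noncomputable def tentWaveSlope (T x : ℝ) : ℝ :=
  if x ≤ T / 4 then 1 else if x ≤ 3 * T / 4 then -1 else 1

theorem tentWave_eq_max_min (hT : 0 ≤ T) (x : ℝ) :
    tentWave T x = max (min x (T / 2 - x)) (x - T) := by
  unfold tentWave
  split_ifs with h₁ h₂
  · rw [min_eq_left (by linarith), max_eq_left (by linarith)]
  · rw [min_eq_right (by linarith), max_eq_left (by linarith)]
  · rw [min_eq_right (by linarith), max_eq_right (by linarith)]

theorem continuous_tentWave (hT : 0 ≤ T) : Continuous (tentWave T) := by
  rw [funext (tentWave_eq_max_min hT)]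
  fun_prop

theorem hasDerivAt_tentWave (hx₁ : x ≠ T / 4) (hx₂ : x ≠ 3 * T / 4) :
    HasDerivAt (tentWave T) (tentWaveSlope T x) x := by
  rcases hx₁.lt_or_gt with h₁ | h₁
  · have hw : tentWave T =ᶠ[𝓝 x] fun y => y := by
      filter_upwards [Iio_mem_nhds h₁] with y hy
      simp [tentWave, hy.out.le]
    simpa [tentWaveSlope, h₁.le] using (hasDerivAt_id x).congr_of_eventuallyEq hw
  rcases hx₂.lt_or_gt with h₂ | h₂
  · have hw : tentWave T =ᶠ[𝓝 x] fun y => T / 2 - y := by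
      filter_upwards [Ioo_mem_nhds h₁ h₂] with y hy
      simp [tentWave, not_le.mpr hy.1, hy.2.le]
    simpa [tentWaveSlope, not_le.mpr h₁, h₂.le] using
      ((hasDerivAt_id x).const_sub (T / 2)).congr_of_eventuallyEq hw
  · have hw : tentWave T =ᶠ[𝓝 x] fun y => y - T := by
      filter_upwards [Ioi_mem_nhds h₁, Ioi_mem_nhds h₂] with y hy₁ hy₂
      simp [tentWave, not_le.mpr hy₁.out, not_le.mpr hy₂.out]
    simpa [tentWaveSlope, not_le.mpr h₁, not_le.mpr h₂] using
      ((hasDerivAt_id x).sub_const T).congr_of_eventuallyEq hw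

theorem tentWaveSlope_sq (T x : ℝ) : tentWaveSlope T x ^ 2 = 1 := by
  unfold tentWaveSlope
  split_ifs <;> norm_num

theorem integral_tentWaveSlope_sq (T : ℝ) : ∫ x in (0 : ℝ)..T, tentWaveSlope T x ^ 2 = T := by
  simp [tentWaveSlope_sq]

theorem abs_tentWave_le (hx : x ∈ Icc 0 T) : |tentWave T x| ≤ T / 4 := by
  obtain ⟨hx₀, hxT⟩ := hx
  rw [abs_le]
  unfold tentWave
  split_ifs <;> constructor <;> linarith

theorem tentWave_zero (hT : 0 ≤ T) : tentWave T 0 = 0 := by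
  simp [tentWave, show (0 : ℝ) ≤ T / 4 by linarith]

theorem tentWave_self (hT : 0 < T) : tentWave T T = 0 := by
  simp [tentWave, show ¬T ≤ T / 4 by linarith, show ¬T ≤ 3 * T / 4 by linarith]

theorem tentWave_quarter (T : ℝ) : tentWave T (T / 4) = T / 4 := by
  simp [tentWave]

theorem tentWave_three_quarters (hT : 0 < T) : tentWave T (3 * T / 4) = -(T / 4) := by
  simp [tentWave, show ¬3 * T / 4 ≤ T / 4 by linarith]
  ring

end TentWave

open TentWave in
theorem stmt3 (T : ℝ) (hT : 0 < T)
    (w w' : ℝ → ℝ)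
    (hw : w = fun x => if x ≤ T / 4 then x else if x ≤ 3 * T / 4 then T / 2 - x else x - T)
    (hw' : w' = fun x => if x ≤ T / 4 then (1:ℝ) else if x ≤ 3 * T / 4 then -1 else 1) :
    ContinuousOn w (Set.Icc 0 T) ∧
    (∀ x ∈ Set.Icc (0:ℝ) T, x ≠ T / 4 → x ≠ 3 * T / 4 →
      HasDerivWithinAt w (w' x) (Set.Icc 0 T) x) ∧
    IntervalIntegrable (fun x => (w' x) ^ 2) MeasureTheory.volume 0 T ∧
    w 0 = 0 ∧ w T = 0 ∧
    IsGreatest (w '' Set.Icc 0 T) (T / 4) ∧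
    IsLeast (w '' Set.Icc 0 T) (-(T / 4)) ∧
    IsGreatest ((fun x => |w x|) '' Set.Icc 0 T) (T / 4) ∧
    (∫ x in (0:ℝ)..T, (w' x) ^ 2) = (16 / T) * (T / 4) ^ 2 := by
  obtain rfl : w = tentWave T := hw
  obtain rfl : w' = tentWaveSlope T := hw'
  have hquarter : T / 4 ∈ Icc 0 T := ⟨by linarith, by linarith⟩
  have hthree_quarters : 3 * T / 4 ∈ Icc 0 T := ⟨by linarith, by linarith⟩
  refine ⟨(continuous_tentWave hT.le).continuousOn,
    fun x _ hx₁ hx₂ => (hasDerivAt_tentWave hx₁ hx₂).hasDerivWithinAt,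
    by simp only [tentWaveSlope_sq]; exact intervalIntegrable_const,
    tentWave_zero hT.le, tentWave_self hT,
    ⟨⟨T / 4, hquarter, tentWave_quarter T⟩, ?_⟩,
    ⟨⟨3 * T / 4, hthree_quarters, tentWave_three_quarters hT⟩, ?_⟩,
    ⟨⟨T / 4, hquarter, by simp [tentWave_quarter, hquarter.1]⟩, ?_⟩, ?_⟩
  · rintro _ ⟨x, hx, rfl⟩
    exact (le_abs_self _).trans (abs_tentWave_le hx)
  · rintro _ ⟨x, hx, rfl⟩
    exact neg_le_of_abs_le (abs_tentWave_le hx)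
  · rintro _ ⟨x, hx, rfl⟩
    exact abs_tentWave_le hx
  · rw [integral_tentWaveSlope_sq]
    field_simp
    ring
end

section
/- Let T > 0 and let u ∈ H^1(0,T) be nonzero with u(0) + u(T) = 0. Then ∫₀ᵀ u'(t)² dt ≥ (4/T)·‖u‖_∞². -/
/-!
Let `s` be a point where `|u|` attains its maximum `M`. The antiperiodicity `u 0 = -u T` gives
`2 u(s) = (u(s) - u(0)) + (u(s) - u(T))`, and each difference is an integral of `u'`, so
`2M ≤ ∫₀ᵀ |u'|`. Cauchy–Schwarz then gives `4M² ≤ (∫₀ᵀ |u'|)² ≤ T ∫₀ᵀ u'²`.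
-/

open Set MeasureTheory

theorem aestronglyMeasurable_of_hasDerivAt {u u' : ℝ → ℝ} {s : Set ℝ} (hs : MeasurableSet s)
    (hderiv : ∀ t ∈ s, HasDerivAt u (u' t) t) :
    AEStronglyMeasurable u' (volume.restrict s) :=
  (measurable_deriv u).aestronglyMeasurable.congr <|
    ae_restrict_of_forall_mem hs fun t ht => (hderiv t ht).deriv

theorem intervalIntegrable_of_hasDerivAt_of_intervalIntegrable_sq {u u' : ℝ → ℝ} {a b : ℝ}
    (hab : a ≤ b) (hderiv : ∀ t ∈ Ioo a b, HasDerivAt u (u' t) t)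
    (hsq : IntervalIntegrable (fun t => u' t ^ 2) volume a b) :
    IntervalIntegrable u' volume a b := by
  have hmeas := aestronglyMeasurable_of_hasDerivAt measurableSet_Ioo hderiv
  rw [intervalIntegrable_iff_integrableOn_Ioo_of_le hab] at hsq ⊢
  exact ((memLp_two_iff_integrable_sq hmeas).2 hsq).integrable one_le_two

theorem sq_integral_abs_le_mul_integral_sq {f : ℝ → ℝ} {a b : ℝ} (hab : a ≤ b)
    (hf : IntervalIntegrable f volume a b)
    (hsq : IntervalIntegrable (fun t => f t ^ 2) volume a b) :
    (∫ t in a..b, |f t|) ^ 2 ≤ (b - a) * ∫ t in a..b, f t ^ 2 := by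
  -- `∫ (x - |f|)² ≥ 0` is a quadratic in `x`; its discriminant is `≤ 0`.
  have hquad : ∀ x : ℝ,
      0 ≤ (b - a) * (x * x) + (-2 * ∫ t in a..b, |f t|) * x + ∫ t in a..b, f t ^ 2 := by
    intro x
    have hexpand : ∫ t in a..b, (x - |f t|) ^ 2 =
        (b - a) * (x * x) + (-2 * ∫ t in a..b, |f t|) * x + ∫ t in a..b, f t ^ 2 := by
      simp_rw [sub_sq, sq_abs]
      rw [intervalIntegral.integral_add (intervalIntegrable_const.sub (hf.abs.const_mul _)) hsq,
        intervalIntegral.integral_sub intervalIntegrable_const (hf.abs.const_mul _),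
        intervalIntegral.integral_const, intervalIntegral.integral_const_mul]
      simp only [smul_eq_mul]
      ring
    exact hexpand ▸ intervalIntegral.integral_nonneg hab fun t _ => sq_nonneg _
  have := discrim_le_zero hquad
  rw [discrim] at this
  linarith

theorem abs_sub_le_integral_abs_of_hasDerivAt {u u' : ℝ → ℝ} {a b : ℝ} (hab : a ≤ b)
    (hcont : ContinuousOn u (Icc a b)) (hderiv : ∀ t ∈ Ioo a b, HasDerivAt u (u' t) t)
    (hint : IntervalIntegrable u' volume a b) :
    |u b - u a| ≤ ∫ t in a..b, |u' t| := by
  rw [← intervalIntegral.integral_eq_sub_of_hasDerivAt_of_le hab hcont hderiv hint]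
  exact intervalIntegral.abs_integral_le_integral_abs hab

theorem two_mul_abs_le_integral_abs_of_add_eq_zero {u u' : ℝ → ℝ} {a b : ℝ}
    (hcont : ContinuousOn u (Icc a b)) (hderiv : ∀ t ∈ Ioo a b, HasDerivAt u (u' t) t)
    (hint : IntervalIntegrable u' volume a b) (hant : u a + u b = 0) {s : ℝ} (hs : s ∈ Icc a b) :
    2 * |u s| ≤ ∫ t in a..b, |u' t| := by
  have hs' : s ∈ uIcc a b := Icc_subset_uIcc hs
  have hleft : uIcc a s ⊆ uIcc a b := uIcc_subset_uIcc left_mem_uIcc hs'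
  have hright : uIcc s b ⊆ uIcc a b := uIcc_subset_uIcc hs' right_mem_uIcc
  have h₁ := abs_sub_le_integral_abs_of_hasDerivAt hs.1
    (hcont.mono (Icc_subset_Icc_right hs.2)) (fun t ht => hderiv t ⟨ht.1, ht.2.trans_le hs.2⟩)
    (hint.mono_set hleft)
  have h₂ := abs_sub_le_integral_abs_of_hasDerivAt hs.2
    (hcont.mono (Icc_subset_Icc_left hs.1)) (fun t ht => hderiv t ⟨hs.1.trans_lt ht.1, ht.2⟩)
    (hint.mono_set hright)
  rw [← intervalIntegral.integral_add_adjacent_intervals (hint.abs.mono_set hleft)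
    (hint.abs.mono_set hright)]
  calc 2 * |u s| = |(u s - u a) - (u b - u s)| := by
        rw [show (u s - u a) - (u b - u s) = 2 * u s - (u a + u b) by ring, hant, sub_zero,
          abs_mul, abs_two]
    _ ≤ |u s - u a| + |u b - u s| := abs_sub _ _
    _ ≤ _ := add_le_add h₁ h₂

theorem stmt4_general (T : ℝ) (hT : 0 < T) (u u' : ℝ → ℝ) (M : ℝ)
    (hderiv : ∀ t ∈ Set.Icc (0:ℝ) T, HasDerivWithinAt u (u' t) (Set.Icc 0 T) t)
    (hint : IntervalIntegrable (fun t => (u' t) ^ 2) MeasureTheory.volume 0 T)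
    (hant : u 0 + u T = 0)
    (hM : IsGreatest ((fun t => |u t|) '' Set.Icc 0 T) M) :
    (4 / T) * M ^ 2 ≤ ∫ t in (0:ℝ)..T, (u' t) ^ 2 := by
  obtain ⟨s, hs, rfl⟩ := hM.1
  have hcont : ContinuousOn u (Icc 0 T) := fun t ht => (hderiv t ht).continuousWithinAt
  have hderiv' : ∀ t ∈ Ioo 0 T, HasDerivAt u (u' t) t := fun t ht =>
    (hderiv t (Ioo_subset_Icc_self ht)).hasDerivAt (Icc_mem_nhds ht.1 ht.2)
  have hint' := intervalIntegrable_of_hasDerivAt_of_intervalIntegrable_sq hT.le hderiv' hint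
  have hmax := two_mul_abs_le_integral_abs_of_add_eq_zero hcont hderiv' hint' hant hs
  have hcs := sq_integral_abs_le_mul_integral_sq hT.le hint' hint
  rw [sub_zero] at hcs
  calc 4 / T * |u s| ^ 2 = (2 * |u s|) ^ 2 / T := by ring
    _ ≤ (∫ t in (0:ℝ)..T, |u' t|) ^ 2 / T := by gcongr
    _ ≤ ∫ t in (0:ℝ)..T, u' t ^ 2 := by rwa [div_le_iff₀ hT, mul_comm]

theorem stmt4 (T : ℝ) (hT : 0 < T) (u u' : ℝ → ℝ) (M : ℝ)
    (hderiv : ∀ t ∈ Set.Icc (0:ℝ) T, HasDerivWithinAt u (u' t) (Set.Icc 0 T) t)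
    (hint : IntervalIntegrable (fun t => (u' t) ^ 2) MeasureTheory.volume 0 T)
    (hant : u 0 + u T = 0)
    (hM : IsGreatest ((fun t => |u t|) '' Set.Icc 0 T) M)
    (hne : ∃ t ∈ Set.Icc (0:ℝ) T, u t ≠ 0) :
    (4 / T) * M ^ 2 ≤ ∫ t in (0:ℝ)..T, (u' t) ^ 2 :=
  stmt4_general T hT u u' M hderiv hint hant hM
end

section
/- Let T > 0 and let u ∈ H^1(0,T) be a nonzero function with u(0) + u(T) = 0. Then ∫₀ᵀ u'(t)² dt ≥ (π²/T²)·∫₀ᵀ u(t)² dt. -/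
/-!
Picone's identity: if `φ > 0` solves `φ'' = -κ φ` and `ρ = φ' / φ`, then
`u'² - κ u² = (u' - ρ u)² + (ρ u²)'`, so `∫ (u'² - κ u²)` is bounded below by the
boundary term `[ρ u²]`.

For `k < π / T` the antiperiodic `u` has a zero `c`. Use `φ = sin (k (t - s))` on `[c, T]` and
its translate by `T` on `[0, c]`: this is one pass around the circle of length `T` starting at
`c`, along which `φ` stays positive since `k T < π`. The boundary terms vanish at `c` and cancel
at `T ≡ 0` because `u T ^ 2 = u 0 ^ 2`, so `k² ∫ u² ≤ ∫ u'²`; now let `k → π / T`.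
(For `k = π / T` itself `φ` would have to vanish at `c`, where `ρ` blows up.)
-/

open MeasureTheory Real Set Filter Topology

theorem picone_le_integral {a b κ : ℝ} {φ φ' u u' : ℝ → ℝ} (hab : a ≤ b)
    (hφ : ∀ t ∈ Icc a b, HasDerivAt φ (φ' t) t)
    (hφ' : ∀ t ∈ Icc a b, HasDerivAt φ' (-(κ * φ t)) t)
    (hφ_pos : ∀ t ∈ Icc a b, 0 < φ t)
    (hu : ContinuousOn u (Icc a b))
    (hu' : ∀ t ∈ Ioo a b, HasDerivWithinAt u (u' t) (Ioi t) t)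
    (hint : IntervalIntegrable (fun t => u' t ^ 2) volume a b) :
    φ' b / φ b * u b ^ 2 - φ' a / φ a * u a ^ 2
      ≤ ∫ t in a..b, (u' t ^ 2 - κ * u t ^ 2) := by
  set ρ : ℝ → ℝ := fun t => φ' t / φ t
  have hρ : ∀ t ∈ Icc a b, HasDerivAt ρ (-κ - ρ t ^ 2) t := fun t ht =>
    ((hφ' t ht).div (hφ t ht) (hφ_pos t ht).ne').congr_deriv (by
      have := (hφ_pos t ht).ne'
      simp only [ρ]; field_simp)
  have hρ_cont : ContinuousOn ρ (Icc a b) := fun t ht =>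
    (hρ t ht).continuousAt.continuousWithinAt
  refine intervalIntegral.sub_le_integral_of_hasDeriv_right_of_le hab (hρ_cont.mul (hu.pow 2))
    (g' := fun t => (-κ - ρ t ^ 2) * u t ^ 2 + ρ t * (2 * u t * u' t))
    (fun t ht => ?_) ?_ (fun t _ => ?_)
  · have hu2 := (hu' t ht).fun_pow 2
    refine ((hρ t (Ioo_subset_Icc_self ht)).hasDerivWithinAt.mul hu2).congr_deriv ?_
    push_cast; ring
  · refine (intervalIntegrable_iff_integrableOn_Icc_of_le hab).mp (hint.sub ?_)
    exact (continuousOn_const.mul (hu.pow 2)).intervalIntegrable_of_Icc hab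
  · nlinarith [sq_nonneg (u' t - ρ t * u t)]

theorem sin_picone_le_integral {a b k s : ℝ} {u u' : ℝ → ℝ} (hab : a ≤ b) (hk : 0 < k)
    (hsa : s < a) (hbs : k * (b - s) < π)
    (hu : ContinuousOn u (Icc a b))
    (hu' : ∀ t ∈ Ioo a b, HasDerivWithinAt u (u' t) (Ioi t) t)
    (hint : IntervalIntegrable (fun t => u' t ^ 2) volume a b) :
    k * cos (k * (b - s)) / sin (k * (b - s)) * u b ^ 2
        - k * cos (k * (a - s)) / sin (k * (a - s)) * u a ^ 2
      ≤ ∫ t in a..b, (u' t ^ 2 - k ^ 2 * u t ^ 2) := by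
  have hlin : ∀ t, HasDerivAt (fun t => k * (t - s)) k t := fun t => by
    simpa using ((hasDerivAt_id t).sub_const s).const_mul k
  refine picone_le_integral hab (κ := k ^ 2) (φ := fun t => sin (k * (t - s)))
    (fun t _ => by simpa [mul_comm] using (hlin t).sin)
    (fun t _ => by simpa [mul_comm, mul_assoc, sq] using ((hlin t).cos).const_mul k)
    (fun t ht => sin_pos_of_pos_of_lt_pi (mul_pos hk (by linarith [ht.1]))
      (lt_of_le_of_lt (by gcongr; exact ht.2) hbs)) hu hu' hint

theorem exists_mem_Icc_eq_zero_of_add_eq_zero {a b : ℝ} {u : ℝ → ℝ} (hab : a ≤ b)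
    (hu : ContinuousOn u (Icc a b)) (hant : u a + u b = 0) : ∃ c ∈ Icc a b, u c = 0 := by
  have h0 : (0 : ℝ) ∈ uIcc (u a) (u b) := by
    rw [mem_uIcc]; rcases le_total (u a) 0 with h | h
    · exact Or.inl ⟨h, by linarith⟩
    · exact Or.inr ⟨by linarith, h⟩
  rw [← uIcc_of_le hab] at hu
  simpa [uIcc_of_le hab] using intermediate_value_uIcc hu h0

theorem sq_mul_integral_sq_le_of_antiperiodic {T k : ℝ} {u u' : ℝ → ℝ} (hT : 0 ≤ T)
    (hk : 0 < k) (hkT : k * T < π) (hu : ContinuousOn u (Icc 0 T))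
    (hu' : ∀ t ∈ Ioo 0 T, HasDerivWithinAt u (u' t) (Ioi t) t)
    (hint : IntervalIntegrable (fun t => u' t ^ 2) volume 0 T) (hant : u 0 + u T = 0) :
    k ^ 2 * ∫ t in (0 : ℝ)..T, u t ^ 2 ≤ ∫ t in (0 : ℝ)..T, u' t ^ 2 := by
  obtain ⟨c, ⟨hc0, hcT⟩, huc⟩ := exists_mem_Icc_eq_zero_of_add_eq_zero hT hu hant
  set s := c - (π / k - T) / 2 with hs
  have hgap : T < π / k := by rwa [lt_div_iff₀ hk, mul_comm]
  have hsub : ∀ {a b}, 0 ≤ a → a ≤ b → b ≤ T → uIcc a b ⊆ uIcc 0 T :=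
    fun ha hab hb => by rw [uIcc_of_le hab, uIcc_of_le hT]; exact Icc_subset_Icc ha hb
  have hright := sin_picone_le_integral (s := s) hcT hk (by linarith)
    ((lt_div_iff₀' hk).mp (by linarith)) (hu.mono (Icc_subset_Icc hc0 le_rfl))
    (fun t ht => hu' t ⟨hc0.trans_lt ht.1, ht.2⟩) (hint.mono_set (hsub hc0 hcT le_rfl))
  have hleft := sin_picone_le_integral (s := s - T) hc0 hk (by linarith)
    ((lt_div_iff₀' hk).mp (by linarith)) (hu.mono (Icc_subset_Icc le_rfl hcT))
    (fun t ht => hu' t ⟨ht.1, ht.2.trans_le hcT⟩) (hint.mono_set (hsub le_rfl hc0 hcT))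
  have huT : u T ^ 2 = u 0 ^ 2 := by rw [show u T = -u 0 by linarith, neg_sq]
  rw [show (0 : ℝ) - (s - T) = T - s by ring] at hleft
  simp only [huc, huT, ne_eq, OfNat.ofNat_ne_zero, not_false_eq_true, zero_pow, mul_zero,
    sub_zero, zero_sub] at hleft hright
  have hsq : IntervalIntegrable (fun t => k ^ 2 * u t ^ 2) volume 0 T :=
    (continuousOn_const.mul (hu.pow 2)).intervalIntegrable_of_Icc hT
  have hdiff := hint.sub hsq
  calc k ^ 2 * ∫ t in (0 : ℝ)..T, u t ^ 2
      ≤ k ^ 2 * (∫ t in (0 : ℝ)..T, u t ^ 2)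
          + ∫ t in (0 : ℝ)..T, (u' t ^ 2 - k ^ 2 * u t ^ 2) := by
        rw [← intervalIntegral.integral_add_adjacent_intervals
          (hdiff.mono_set (hsub le_rfl hc0 hcT)) (hdiff.mono_set (hsub hc0 hcT le_rfl))]
        linarith
    _ = ∫ t in (0 : ℝ)..T, u' t ^ 2 := by
        rw [intervalIntegral.integral_sub hint hsq, intervalIntegral.integral_const_mul]; ring

theorem stmt8_general (T : ℝ) (hT : 0 < T) (u u' : ℝ → ℝ)
    (hderiv : ∀ t ∈ Set.Icc (0:ℝ) T, HasDerivWithinAt u (u' t) (Set.Icc 0 T) t)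
    (hint : IntervalIntegrable (fun t => (u' t) ^ 2) MeasureTheory.volume 0 T)
    (hant : u 0 + u T = 0) :
    (Real.pi ^ 2 / T ^ 2) * ∫ t in (0:ℝ)..T, (u t) ^ 2 ≤ ∫ t in (0:ℝ)..T, (u' t) ^ 2 := by
  have hu : ContinuousOn u (Icc 0 T) := fun t ht => (hderiv t ht).continuousWithinAt
  have hu' : ∀ t ∈ Ioo 0 T, HasDerivWithinAt u (u' t) (Ioi t) t := fun t ht =>
    ((hderiv t (Ioo_subset_Icc_self ht)).hasDerivAt (Icc_mem_nhds ht.1 ht.2)).hasDerivWithinAt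
  have hlim : Tendsto (fun k => k ^ 2 * ∫ t in (0:ℝ)..T, u t ^ 2) (𝓝[<] (π / T))
      (𝓝 ((π / T) ^ 2 * ∫ t in (0:ℝ)..T, u t ^ 2)) :=
    ((continuous_pow 2).mul continuous_const).continuousAt.tendsto.mono_left nhdsWithin_le_nhds
  rw [← div_pow]
  refine le_of_tendsto hlim ?_
  filter_upwards [Ioo_mem_nhdsLT (div_pos pi_pos hT)] with k ⟨hk, hkT⟩
  exact sq_mul_integral_sq_le_of_antiperiodic hT.le hk ((lt_div_iff₀ hT).mp hkT) hu hu' hint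
    hant

theorem stmt8 (T : ℝ) (hT : 0 < T) (u u' : ℝ → ℝ)
    (hderiv : ∀ t ∈ Set.Icc (0:ℝ) T, HasDerivWithinAt u (u' t) (Set.Icc 0 T) t)
    (hint : IntervalIntegrable (fun t => (u' t) ^ 2) MeasureTheory.volume 0 T)
    (hant : u 0 + u T = 0)
    (hne : ∃ t ∈ Set.Icc (0:ℝ) T, u t ≠ 0) :
    (Real.pi ^ 2 / T ^ 2) * ∫ t in (0:ℝ)..T, (u t) ^ 2 ≤ ∫ t in (0:ℝ)..T, (u' t) ^ 2 :=
  stmt8_general T hT u u' hderiv hint hant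
end

section
/- Let T > 0 and let u ∈ C¹([0,T]) be nonzero with u(0) + u(T) = 0 and u'(0) + u'(T) = 0. Then ∫₀ᵀ u'(t)² dt > (4/T)·‖u‖_∞² (strict inequality). -/
/-!
Let `t₀` be a maximum point of `|u|`. Integrating `u'` from `0` to `t₀` and from `t₀` to `T` and
using `u 0 + u T = 0` gives `2 M ≤ ∫ |u'|`, and Cauchy–Schwarz gives `(∫ |u'|)² ≤ T ∫ u'²`.
Equality in Cauchy–Schwarz would force `|u'|` to be a positive constant, but `u'(0) + u'(T) = 0`
makes `u'` vanish somewhere, so the inequality is strict.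
-/

open Set intervalIntegral MeasureTheory

theorem integral_eq_sub_of_hasDerivWithinAt_Icc {u u' : ℝ → ℝ} {a b : ℝ} (hab : a ≤ b)
    (hderiv : ∀ t ∈ Icc a b, HasDerivWithinAt u (u' t) (Icc a b) t)
    (hint : IntervalIntegrable u' volume a b) :
    ∫ t in a..b, u' t = u b - u a :=
  integral_eq_sub_of_hasDerivAt_of_le hab (fun t ht => (hderiv t ht).continuousWithinAt)
    (fun t ht => (hderiv t (Ioo_subset_Icc_self ht)).hasDerivAt (Icc_mem_nhds ht.1 ht.2)) hint

theorem two_mul_abs_le_integral_abs_deriv_of_add_eq_zero {u u' : ℝ → ℝ} {a b : ℝ}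
    (hderiv : ∀ t ∈ Icc a b, HasDerivWithinAt u (u' t) (Icc a b) t)
    (hcont : ContinuousOn u' (Icc a b)) (hant : u a + u b = 0) {t : ℝ} (ht : t ∈ Icc a b) :
    2 * |u t| ≤ ∫ x in a..b, |u' x| := by
  have ftc : ∀ p q, a ≤ p → p ≤ q → q ≤ b → ∫ x in p..q, u' x = u q - u p :=
    fun p q hap hpq hqb => integral_eq_sub_of_hasDerivWithinAt_Icc hpq
      (fun x hx => (hderiv x ⟨hap.trans hx.1, hx.2.trans hqb⟩).mono (Icc_subset_Icc hap hqb))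
      ((hcont.mono (Icc_subset_Icc hap hqb)).intervalIntegrable_of_Icc hpq)
  have habs_int : ∀ p q, a ≤ p → p ≤ q → q ≤ b → IntervalIntegrable (fun x => |u' x|) volume p q :=
    fun p q hap hpq hqb => (hcont.abs.mono (Icc_subset_Icc hap hqb)).intervalIntegrable_of_Icc hpq
  have hab : a ≤ b := ht.1.trans ht.2
  calc 2 * |u t| = |(u t - u a) - (u b - u t)| := by
        rw [show (u t - u a) - (u b - u t) = 2 * u t - (u a + u b) by ring, hant, sub_zero,
          abs_mul, abs_two]
    _ = |(∫ x in a..t, u' x) - ∫ x in t..b, u' x| := by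
        rw [ftc a t le_rfl ht.1 ht.2, ftc t b ht.1 ht.2 le_rfl]
    _ ≤ |∫ x in a..t, u' x| + |∫ x in t..b, u' x| := abs_sub _ _
    _ ≤ (∫ x in a..t, |u' x|) + ∫ x in t..b, |u' x| :=
        add_le_add (abs_integral_le_integral_abs ht.1) (abs_integral_le_integral_abs ht.2)
    _ = ∫ x in a..b, |u' x| :=
        integral_add_adjacent_intervals (habs_int a t le_rfl ht.1 ht.2)
          (habs_int t b ht.1 ht.2 le_rfl)

theorem exists_eq_zero_of_add_eq_zero {g : ℝ → ℝ} {a b : ℝ} (hab : a ≤ b)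
    (hg : ContinuousOn g (Icc a b)) (hant : g a + g b = 0) : ∃ s ∈ Icc a b, g s = 0 := by
  rcases le_total (g a) 0 with h | h
  · exact intermediate_value_Icc hab hg ⟨h, by linarith⟩
  · exact intermediate_value_Icc' hab hg ⟨by linarith, h⟩

theorem sq_integral_abs_lt_mul_integral_sq {g : ℝ → ℝ} {a b : ℝ} (hab : a < b)
    (hg : ContinuousOn g (Icc a b)) {s : ℝ} (hs : s ∈ Icc a b) (hgs : g s = 0)
    (hA : 0 < ∫ x in a..b, |g x|) :
    (∫ x in a..b, |g x|) ^ 2 < (b - a) * ∫ x in a..b, g x ^ 2 := by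
  set A := ∫ x in a..b, |g x|
  set c := A / (b - a)
  have hba : 0 < b - a := sub_pos.2 hab
  have hc : 0 < c := div_pos hA hba
  have hpos : 0 < ∫ x in a..b, (|g x| - c) ^ 2 :=
    integral_pos hab ((hg.abs.sub continuousOn_const).pow 2) (fun x _ => sq_nonneg _)
      ⟨s, hs, by rw [hgs, abs_zero, zero_sub, neg_sq]; positivity⟩
  have hsq_int : IntervalIntegrable (fun x => g x ^ 2) volume a b :=
    (hg.pow 2).intervalIntegrable_of_Icc hab.le
  have habs_int : IntervalIntegrable (fun x => 2 * c * |g x|) volume a b :=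
    (hg.abs.intervalIntegrable_of_Icc hab.le).const_mul _
  have hexpand : ∫ x in a..b, (|g x| - c) ^ 2 = (∫ x in a..b, g x ^ 2) - A ^ 2 / (b - a) := by
    calc ∫ x in a..b, (|g x| - c) ^ 2 = ∫ x in a..b, (g x ^ 2 - 2 * c * |g x| + c ^ 2) :=
          integral_congr fun x _ => by simp only [sub_sq, sq_abs]; ring
      _ = (∫ x in a..b, g x ^ 2) - 2 * c * A + (b - a) * c ^ 2 := by
          rw [intervalIntegral.integral_add (hsq_int.sub habs_int) intervalIntegrable_const,
            intervalIntegral.integral_sub hsq_int habs_int, intervalIntegral.integral_const_mul,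
            intervalIntegral.integral_const, smul_eq_mul]
      _ = (∫ x in a..b, g x ^ 2) - A ^ 2 / (b - a) := by
          rw [show c = A / (b - a) from rfl]
          field_simp
          ring
  rw [hexpand, sub_pos, div_lt_iff₀ hba] at hpos
  linarith

theorem stmt10 (T : ℝ) (hT : 0 < T) (u u' : ℝ → ℝ) (M : ℝ)
    (hderiv : ∀ t ∈ Set.Icc (0:ℝ) T, HasDerivWithinAt u (u' t) (Set.Icc 0 T) t)
    (hcont : ContinuousOn u' (Set.Icc 0 T))
    (hant : u 0 + u T = 0) (hant' : u' 0 + u' T = 0)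
    (hM : IsGreatest ((fun t => |u t|) '' Set.Icc 0 T) M)
    (hne : ∃ t ∈ Set.Icc (0:ℝ) T, u t ≠ 0) :
    (4 / T) * M ^ 2 < ∫ t in (0:ℝ)..T, (u' t) ^ 2 := by
  obtain ⟨t₀, ht₀, hMt₀⟩ := hM.1
  obtain ⟨t₁, ht₁, hut₁⟩ := hne
  have hM_pos : 0 < M := (abs_pos.2 hut₁).trans_le (hM.2 ⟨t₁, ht₁, rfl⟩)
  have h2M : 2 * M ≤ ∫ t in (0:ℝ)..T, |u' t| :=
    hMt₀ ▸ two_mul_abs_le_integral_abs_deriv_of_add_eq_zero hderiv hcont hant ht₀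
  obtain ⟨s, hs, hu's⟩ := exists_eq_zero_of_add_eq_zero hT.le hcont hant'
  have hCS := sq_integral_abs_lt_mul_integral_sq hT hcont hs hu's (by linarith)
  have h4M : 4 * M ^ 2 ≤ (∫ t in (0:ℝ)..T, |u' t|) ^ 2 := by nlinarith
  rw [sub_zero] at hCS
  rw [div_mul_eq_mul_div, div_lt_iff₀ hT]
  linarith
end

section
/- Let T > 0, let a : [0,T] → ℝ be continuous with ∫₀ᵀ a(t) dt > 0, and suppose the periodic problem u'' + a(t)u = 0, u(0)=u(T), u'(0)=u'(T) has a nontrivial solution u ∈ C²([0,T]). Then ∫₀ᵀ a⁺(t) dt ≥ 16/T, where a⁺(t) = max{a(t),0}. -/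
open Set MeasureTheory intervalIntegral

/-- Cauchy–Schwarz for interval integrals: `(∫ f)² ≤ (s-r) ∫ f²`. -/
private lemma cs_aux (f : ℝ → ℝ) (r s : ℝ) (hrs : r ≤ s)
    (hf : ContinuousOn f (Set.Icc r s)) :
    (∫ t in r..s, f t)^2 ≤ (s - r) * ∫ t in r..s, (f t)^2 := by
  rcases eq_or_lt_of_le hrs with rfl | hlt
  · simp
  have hu : Set.uIcc r s = Set.Icc r s := Set.uIcc_of_le hrs
  have hif : IntervalIntegrable f volume r s := by
    apply ContinuousOn.intervalIntegrable; rw [hu]; exact hf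
  have hif2 : IntervalIntegrable (fun t => (f t)^2) volume r s := by
    apply ContinuousOn.intervalIntegrable; rw [hu]; exact hf.pow 2
  set A := ∫ t in r..s, f t with hA
  set L := s - r with hL
  have hLpos : 0 < L := by simp only [hL]; linarith
  have key : 0 ≤ ∫ t in r..s, (L * f t - A)^2 :=
    intervalIntegral.integral_nonneg hrs (fun t _ => sq_nonneg _)
  have expand : (∫ t in r..s, (L * f t - A)^2)
      = L^2 * (∫ t in r..s, (f t)^2) - L * A^2 := by
    have h1 : ∀ t : ℝ, (L * f t - A)^2 = (L^2 * (f t)^2 - (2*L*A) * f t) + A^2 :=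
      fun t => by ring
    simp_rw [h1]
    rw [intervalIntegral.integral_add ((hif2.const_mul _).sub (hif.const_mul _))
        intervalIntegrable_const,
      intervalIntegral.integral_sub (hif2.const_mul _) (hif.const_mul _),
      intervalIntegral.integral_const_mul, intervalIntegral.integral_const_mul,
      intervalIntegral.integral_const]
    simp only [smul_eq_mul, ← hA, ← hL]
    ring
  rw [expand] at key
  nlinarith [key, hLpos]

set_option maxHeartbeats 1000000 in
theorem stmt11 (T : ℝ) (hT : 0 < T) (a : ℝ → ℝ)
    (ha : ContinuousOn a (Set.Icc 0 T))
    (hpos : 0 < ∫ t in (0:ℝ)..T, a t)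
    (u u' : ℝ → ℝ)
    (hd1 : ∀ t ∈ Set.Icc (0:ℝ) T, HasDerivWithinAt u (u' t) (Set.Icc 0 T) t)
    (hd2 : ∀ t ∈ Set.Icc (0:ℝ) T, HasDerivWithinAt u' (-(a t * u t)) (Set.Icc 0 T) t)
    (hbc1 : u 0 = u T) (hbc2 : u' 0 = u' T)
    (hne : ∃ t ∈ Set.Icc (0:ℝ) T, u t ≠ 0) :
    16 / T ≤ ∫ t in (0:ℝ)..T, max (a t) 0 := by
  have hu_c : ContinuousOn u (Set.Icc 0 T) := fun t ht => (hd1 t ht).continuousWithinAt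
  have hu'_c : ContinuousOn u' (Set.Icc 0 T) := fun t ht => (hd2 t ht).continuousWithinAt
  have hIcc : Set.uIcc (0:ℝ) T = Set.Icc 0 T := Set.uIcc_of_le hT.le
  have int_of : ∀ f : ℝ → ℝ, ContinuousOn f (Set.Icc 0 T) →
      IntervalIntegrable f volume 0 T := by
    intro f hf
    apply ContinuousOn.intervalIntegrable; rw [hIcc]; exact hf
  -- interior derivatives
  have hDu : ∀ x ∈ Set.Ioo (0:ℝ) T, HasDerivAt u (u' x) x := fun x hx =>
    (hd1 x (Set.Ioo_subset_Icc_self hx)).hasDerivAt (Icc_mem_nhds hx.1 hx.2)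
  have hDu' : ∀ x ∈ Set.Ioo (0:ℝ) T, HasDerivAt u' (-(a x * u x)) x := fun x hx =>
    (hd2 x (Set.Ioo_subset_Icc_self hx)).hasDerivAt (Icc_mem_nhds hx.1 hx.2)
  -- ∫ a u = 0
  have haU : (∫ t in (0:ℝ)..T, a t * u t) = 0 := by
    have h := integral_eq_sub_of_hasDeriv_right_of_le hT.le hu'_c
      (fun x hx => (hDu' x hx).hasDerivWithinAt)
      ((int_of _ ((ha.mul hu_c))).neg)
    rw [intervalIntegral.integral_neg] at h
    rw [hbc2] at h
    linarith [h]
  -- energy identity : ∫ u'^2 = ∫ a u^2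
  have hE : (∫ t in (0:ℝ)..T, (u' t)^2) = ∫ t in (0:ℝ)..T, a t * (u t)^2 := by
    have h := integral_eq_sub_of_hasDeriv_right_of_le (f := fun t => u t * u' t)
      (f' := fun t => ((u' t)^2 - a t * (u t)^2)) hT.le (hu_c.mul hu'_c)
      (fun x hx => by
        have := ((hDu x hx).mul (hDu' x hx)).hasDerivWithinAt
          (s := Set.Ioi x)
        convert this using 1 <;> first | rfl | ring)
      ((int_of _ ((hu'_c.pow 2).sub (ha.mul (hu_c.pow 2)))))
    have h' : (∫ t in (0:ℝ)..T, ((u' t)^2 - a t * (u t)^2)) = u T * u' T - u 0 * u' 0 := h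
    rw [← hbc1, ← hbc2, sub_self] at h'
    clear h
    have h := h'
    have hsub := intervalIntegral.integral_sub (int_of _ (hu'_c.pow 2))
      (int_of _ (ha.mul (hu_c.pow 2)))
    simp only [Pi.mul_apply, Pi.pow_apply] at hsub
    rw [hsub] at h
    linarith [h]
  -- extrema of u
  obtain ⟨p, hp, hpmax⟩ := isCompact_Icc.exists_isMaxOn (Set.nonempty_Icc.2 hT.le) hu_c
  obtain ⟨q, hq, hqmin⟩ := isCompact_Icc.exists_isMinOn (Set.nonempty_Icc.2 hT.le) hu_c
  set Mu := u p with hMu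
  set mu := u q with hmu
  have hmM : mu ≤ Mu := hpmax hq
  set D := Mu - mu with hD
  have hDnn : 0 ≤ D := by simp [hD]; linarith
  rcases eq_or_lt_of_le hDnn with hD0 | hDpos
  · -- u is constant, contradiction with hpos
    exfalso
    obtain ⟨t₀, ht₀, hc0⟩ := hne
    have hconst : ∀ t ∈ Set.Icc (0:ℝ) T, u t = Mu := by
      intro t ht
      have h1 : u t ≤ Mu := hpmax ht
      have h2 : mu ≤ u t := hqmin ht
      have : mu = Mu := by linarith [hD0.symm ▸ (rfl : D = D), sub_eq_zero.mp (by linarith : Mu - mu = 0)]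
      linarith
    have hMune : Mu ≠ 0 := by rw [← hconst t₀ ht₀]; exact hc0
    have hu'0 : ∀ t ∈ Set.Icc (0:ℝ) T, u' t = 0 := by
      intro t ht
      have h1 : HasDerivWithinAt u (u' t) (Set.Icc 0 T) t := hd1 t ht
      have h2 : HasDerivWithinAt u 0 (Set.Icc 0 T) t := by
        have := (hasDerivWithinAt_const t (Set.Icc (0:ℝ) T) Mu)
        exact this.congr (fun x hx => (hconst x hx)) (hconst t ht)
      exact ((uniqueDiffOn_Icc hT) t ht).eq_deriv _ h1 h2
    have ha0 : ∀ t ∈ Set.Icc (0:ℝ) T, a t = 0 := by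
      intro t ht
      have h1 : HasDerivWithinAt u' (-(a t * u t)) (Set.Icc 0 T) t := hd2 t ht
      have h2 : HasDerivWithinAt u' 0 (Set.Icc 0 T) t := by
        have := (hasDerivWithinAt_const t (Set.Icc (0:ℝ) T) (0:ℝ))
        exact this.congr (fun x hx => (hu'0 x hx)) (hu'0 t ht)
      have h3 : -(a t * u t) = 0 := ((uniqueDiffOn_Icc hT) t ht).eq_deriv _ h1 h2
      have h4 : u t = Mu := hconst t ht
      rw [h4] at h3
      have : a t * Mu = 0 := by linarith
      rcases mul_eq_zero.mp this with h | h
      · exact h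
      · exact absurd h hMune
    have : (∫ t in (0:ℝ)..T, a t) = 0 := by
      rw [intervalIntegral.integral_congr (g := fun _ => (0:ℝ))
        (fun t ht => ha0 t (hIcc ▸ ht))]
      simp
    linarith
  · -- main case : D > 0
    -- piecewise Cauchy–Schwarz lower bound
    have piece : ∀ r s : ℝ, r ∈ Set.Icc (0:ℝ) T → s ∈ Set.Icc (0:ℝ) T → r ≤ s →
        (u s - u r)^2 ≤ (s - r) * ∫ t in r..s, (u' t)^2 := by
      intro r s hr hs hrs
      have hsub : Set.Icc r s ⊆ Set.Icc 0 T := Set.Icc_subset_Icc hr.1 hs.2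
      have hval : (∫ t in r..s, u' t) = u s - u r := by
        apply integral_eq_sub_of_hasDeriv_right_of_le hrs (hu_c.mono hsub)
        · intro x hx
          exact ((hDu x (Set.Ioo_subset_Ioo hr.1 hs.2 hx)).hasDerivWithinAt)
        · apply ContinuousOn.intervalIntegrable
          rw [Set.uIcc_of_le hrs]; exact hu'_c.mono hsub
      rw [← hval]
      exact cs_aux u' r s hrs (hu'_c.mono hsub)
    set r := min p q with hr
    set s := max p q with hs
    have hrI : r ∈ Set.Icc (0:ℝ) T := ⟨le_min hp.1 hq.1, (min_le_left _ _).trans hp.2⟩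
    have hsI : s ∈ Set.Icc (0:ℝ) T := ⟨hp.1.trans (le_max_left _ _), max_le hp.2 hq.2⟩
    have hrs : r ≤ s := min_le_max
    have hDsq : (u s - u r)^2 = D^2 := by
      rcases le_total p q with h | h
      · have h1 : r = p := by rw [hr]; exact min_eq_left h
        have h2 : s = q := by rw [hs]; exact max_eq_right h
        rw [h1, h2, hD, hMu, hmu]; try ring
      · have h1 : r = q := by rw [hr]; exact min_eq_right h
        have h2 : s = p := by rw [hs]; exact max_eq_left h
        rw [h1, h2, hD, hMu, hmu]; try ring
    -- splitting of the total integral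
    have intu'2 : IntervalIntegrable (fun t => (u' t)^2) volume 0 T :=
      int_of _ (hu'_c.pow 2)
    have isub : ∀ x y : ℝ, x ∈ Set.Icc (0:ℝ) T → y ∈ Set.Icc (0:ℝ) T →
        IntervalIntegrable (fun t => (u' t)^2) volume x y := by
      intro x y hx hy
      have hsub : Set.uIcc x y ⊆ Set.uIcc 0 T :=
        Set.uIcc_subset_uIcc (by rw [hIcc]; exact hx) (by rw [hIcc]; exact hy)
      exact intu'2.mono_set hsub
    set J0 := ∫ t in (0:ℝ)..r, (u' t)^2 with hJ0
    set J1 := ∫ t in r..s, (u' t)^2 with hJ1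
    set J2 := ∫ t in s..T, (u' t)^2 with hJ2
    have hsplit : (∫ t in (0:ℝ)..T, (u' t)^2) = J0 + J1 + J2 := by
      have h1 := intervalIntegral.integral_add_adjacent_intervals
        (isub 0 r (Set.left_mem_Icc.2 hT.le) hrI) (isub r s hrI hsI)
      have h2 := intervalIntegral.integral_add_adjacent_intervals
        (isub 0 s (Set.left_mem_Icc.2 hT.le) hsI) (isub s T hsI (Set.right_mem_Icc.2 hT.le))
      rw [← h2, ← h1]
    have hJ0nn : 0 ≤ J0 := intervalIntegral.integral_nonneg hrI.1 (fun t _ => sq_nonneg _)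
    have hJ1nn : 0 ≤ J1 := intervalIntegral.integral_nonneg hrs (fun t _ => sq_nonneg _)
    have hJ2nn : 0 ≤ J2 := intervalIntegral.integral_nonneg hsI.2 (fun t _ => sq_nonneg _)
    -- inner arc
    have hinner : D^2 ≤ (s - r) * J1 := by
      rw [← hDsq]; exact piece r s hrI hsI hrs
    -- outer arc
    have houter : D^2 ≤ (r + (T - s)) * (J0 + J2) := by
      have hA : (u r - u 0)^2 ≤ (r - 0) * J0 :=
        piece 0 r (Set.left_mem_Icc.2 hT.le) hrI hrI.1
      have hB : (u T - u s)^2 ≤ (T - s) * J2 :=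
        piece s T hsI (Set.right_mem_Icc.2 hT.le) hsI.2
      have hsum : ((u r - u 0) + (u T - u s))^2 = D^2 := by
        rw [← hDsq, hbc1]; ring
      set A := u r - u 0
      set B := u T - u s
      have hr0 : (0:ℝ) ≤ r - 0 := by simpa using hrI.1
      have hs0 : (0:ℝ) ≤ T - s := by linarith [hsI.2]
      have hs1 : (0:ℝ) ≤ (r - 0) * J2 + (T - s) * J0 :=
        add_nonneg (mul_nonneg hr0 hJ2nn) (mul_nonneg hs0 hJ0nn)
      have hsq : 4 * (A * B)^2 ≤ ((r - 0) * J2 + (T - s) * J0)^2 := by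
        nlinarith [sq_nonneg ((r - 0) * J2 - (T - s) * J0),
          mul_le_mul hA hB (sq_nonneg _) (mul_nonneg hr0 hJ0nn)]
      have key : 2 * (A * B) ≤ (r - 0) * J2 + (T - s) * J0 := by
        nlinarith [hs1, hsq]
      rw [← hsum]
      nlinarith [hA, hB, key]
    -- lower bound
    have hlow : 4 * D^2 / T ≤ ∫ t in (0:ℝ)..T, (u' t)^2 := by
      rw [hsplit, div_le_iff₀ hT]
      have hl1 : (0:ℝ) ≤ s - r := by linarith
      have hl2 : (0:ℝ) ≤ r + (T - s) := by linarith [hrI.1, hsI.2]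
      nlinarith [mul_le_mul_of_nonneg_left hinner hl2,
        mul_le_mul_of_nonneg_left houter hl1, sq_nonneg ((s - r) - (r + (T - s))),
        mul_nonneg (mul_nonneg hl1 hl2) (by linarith : (0:ℝ) ≤ J0 + J1 + J2),
        mul_nonneg hl1 hl2, sq_nonneg D, hDpos]
    -- upper bound
    set k := -(Mu + mu)/2 with hk
    have hvb : ∀ t ∈ Set.Icc (0:ℝ) T, (u t + k)^2 ≤ (D/2)^2 := by
      intro t ht
      have h1 : u t ≤ Mu := hpmax ht
      have h2 : mu ≤ u t := hqmin ht
      apply sq_le_sq'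
      · rw [hk, hD]; linarith
      · rw [hk, hD]; linarith
    have hup : (∫ t in (0:ℝ)..T, a t * (u t)^2) ≤
        (D/2)^2 * ∫ t in (0:ℝ)..T, max (a t) 0 := by
      have hv_c : ContinuousOn (fun t => (u t + k)^2) (Set.Icc 0 T) :=
        (hu_c.add continuousOn_const).pow 2
      have e1 : (∫ t in (0:ℝ)..T, a t * (u t + k)^2)
          = (∫ t in (0:ℝ)..T, a t * (u t)^2) + k^2 * ∫ t in (0:ℝ)..T, a t := by
        have hpt : ∀ t : ℝ, a t * (u t + k)^2
            = a t * (u t)^2 + (2*k) * (a t * u t) + k^2 * a t := fun t => by ring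
        simp_rw [hpt]
        rw [intervalIntegral.integral_add (f := fun t => a t * u t ^ 2 + 2 * k * (a t * u t))
            (g := fun t => k ^ 2 * a t) ((int_of _ (ha.mul (hu_c.pow 2))).add
            (((int_of _ (ha.mul hu_c))).const_mul _)) ((int_of _ ha).const_mul _),
          intervalIntegral.integral_add (f := fun t => a t * u t ^ 2)
            (g := fun t => 2 * k * (a t * u t)) (int_of _ (ha.mul (hu_c.pow 2)))
            ((int_of _ (ha.mul hu_c)).const_mul _),
          intervalIntegral.integral_const_mul, intervalIntegral.integral_const_mul, haU]
        ring
      have e2 : (∫ t in (0:ℝ)..T, a t * (u t)^2) ≤ ∫ t in (0:ℝ)..T, a t * (u t + k)^2 := by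
        rw [e1]
        nlinarith [sq_nonneg k, hpos, mul_nonneg (sq_nonneg k) hpos.le]
      have e3 : (∫ t in (0:ℝ)..T, a t * (u t + k)^2) ≤
          ∫ t in (0:ℝ)..T, max (a t) 0 * (D/2)^2 := by
        apply intervalIntegral.integral_mono_on hT.le
          (int_of _ (ha.mul hv_c))
          (int_of _ ((ha.sup' continuousOn_const).mul continuousOn_const))
        intro t ht
        calc a t * (u t + k)^2 ≤ max (a t) 0 * (u t + k)^2 :=
              mul_le_mul_of_nonneg_right (le_max_left _ _) (sq_nonneg _)
          _ ≤ max (a t) 0 * (D/2)^2 :=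
              mul_le_mul_of_nonneg_left (hvb t ht) (le_max_right _ _)
      have e4 : (∫ t in (0:ℝ)..T, max (a t) 0 * (D/2)^2)
          = (D/2)^2 * ∫ t in (0:ℝ)..T, max (a t) 0 := by
        have hc : ∀ t : ℝ, max (a t) 0 * (D/2)^2 = (D/2)^2 * max (a t) 0 :=
          fun t => mul_comm _ _
        simp_rw [hc]
        rw [intervalIntegral.integral_const_mul]
      linarith [e2, e3.trans_eq e4]
    -- conclusion
    have hfinal : 4 * D^2 / T ≤ (D/2)^2 * ∫ t in (0:ℝ)..T, max (a t) 0 := by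
      calc 4 * D^2 / T ≤ ∫ t in (0:ℝ)..T, (u' t)^2 := hlow
        _ = ∫ t in (0:ℝ)..T, a t * (u t)^2 := hE
        _ ≤ (D/2)^2 * ∫ t in (0:ℝ)..T, max (a t) 0 := hup
    rw [div_le_iff₀ hT] at hfinal ⊢
    have hD2 : 0 < D^2 := by positivity
    clear_value D
    have h2 : 16 * D^2 ≤ ((∫ t in (0:ℝ)..T, max (a t) 0) * T) * D^2 := by
      nlinarith [hfinal]
    exact le_of_mul_le_mul_right h2 hD2
end

section
/- Let T > 0 and let a : [0,T] → ℝ be continuous such that the antiperiodic problem u'' + a(t)u = 0, u(0) + u(T) = 0, u'(0) + u'(T) = 0 has a nontrivial solution u ∈ C²([0,T]). Then ∫₀ᵀ a⁺(t) dt > 4/T, where a⁺(t) = max{a(t),0}. -/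
/-!
Since `u 0 = -u T`, `u` has a zero `z ∈ [0, T]`. Extending `u` antiperiodically and `a`
periodically beyond `T` yields a solution of `u'' + a u = 0` on `[z, z + T]` vanishing at both
ends (the equation may fail only at the gluing point `T`), and the periodic extension of `a⁺`
has the same integral over `[z, z + T]` as `a⁺` over `[0, T]`. It therefore suffices to prove
the Dirichlet version `∫_c^d a⁺ > 4 / (d - c)`.

For that, let `τ` be the first point where `u` (say positive somewhere) attains its maximum `M`,
and `[c₁, d₁] ∋ τ` the hump of `u` between the neighbouring zeros. The mean value theorem gives
`ζ₁ < τ < ζ₂` with `u' ζ₁ = M / (τ - c₁)` and `u' ζ₂ = -M / (d₁ - τ)`, while `u' τ = 0`.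
Integrating `u'' = -a u` and using `0 ≤ u ≤ M` gives
`M / (τ - c₁) + M / (d₁ - τ) = ∫_{ζ₁}^{ζ₂} a u ≤ M ∫_{ζ₁}^{ζ₂} a⁺`, strictly because `u < M` on
`[ζ₁, τ)`; conclude with `1 / x + 1 / y ≥ 4 / (x + y)`.
-/

open Set MeasureTheory intervalIntegral

namespace ContinuousOn

variable {f : ℝ → ℝ} {x y v : ℝ}

theorem exists_first_eq (hxy : x ≤ y) (hf : ContinuousOn f (Icc x y)) (hx : f x < v)
    (hy : v ≤ f y) : ∃ s ∈ Ioc x y, f s = v ∧ ∀ t ∈ Ico x s, f t < v := by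
  set S := Icc x y ∩ f ⁻¹' Ici v
  have hS : IsClosed S := hf.preimage_isClosed_of_isClosed isClosed_Icc isClosed_Ici
  have hSne : S.Nonempty := ⟨y, ⟨hxy, le_rfl⟩, hy⟩
  obtain ⟨⟨hxs, hsy⟩, hvs⟩ := hS.csInf_mem hSne (bddBelow_Icc.mono inter_subset_left)
  have hbefore : ∀ t ∈ Ico x (sInf S), f t < v := fun t ht =>
    not_le.1 fun hvt => (csInf_le (bddBelow_Icc.mono inter_subset_left)
      ⟨⟨ht.1, ht.2.le.trans hsy⟩, hvt⟩).not_gt ht.2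
  refine ⟨sInf S, ⟨hxs.lt_of_ne ?_, hsy⟩, le_antisymm ?_ hvs, hbefore⟩
  · exact fun h => (hx.trans_le (h ▸ hvs)).false
  · by_contra! hlt
    obtain ⟨r, hr, hfr⟩ := intermediate_value_Ico hxs (hf.mono (Icc_subset_Icc_right hsy))
      ⟨hx.le, hlt⟩
    exact (hbefore r hr).ne hfr

theorem exists_last_eq (hxy : x ≤ y) (hf : ContinuousOn f (Icc x y)) (hx : v ≤ f x)
    (hy : f y < v) : ∃ s ∈ Ico x y, f s = v ∧ ∀ t ∈ Ioc s y, f t < v := by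
  set S := Icc x y ∩ f ⁻¹' Ici v
  have hS : IsClosed S := hf.preimage_isClosed_of_isClosed isClosed_Icc isClosed_Ici
  have hSne : S.Nonempty := ⟨x, ⟨le_rfl, hxy⟩, hx⟩
  obtain ⟨⟨hxs, hsy⟩, hvs⟩ := hS.csSup_mem hSne (bddAbove_Icc.mono inter_subset_left)
  have hafter : ∀ t ∈ Ioc (sSup S) y, f t < v := fun t ht =>
    not_le.1 fun hvt => (le_csSup (bddAbove_Icc.mono inter_subset_left)
      ⟨⟨hxs.trans ht.1.le, ht.2⟩, hvt⟩).not_gt ht.1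
  refine ⟨sSup S, ⟨hxs, hsy.lt_of_ne ?_⟩, le_antisymm ?_ hvs, hafter⟩
  · exact fun h => (hy.trans_le (h ▸ hvs)).false
  · by_contra! hlt
    obtain ⟨r, hr, hfr⟩ := intermediate_value_Ioc' hsy (hf.mono (Icc_subset_Icc_left hxs))
      ⟨hy.le, hlt⟩
    exact (hafter r hr).ne hfr

theorem exists_eq_zero_of_add_eq_zero (hxy : x ≤ y)
    (hf : ContinuousOn f (Icc x y)) (h : f x + f y = 0) : ∃ z ∈ Icc x y, f z = 0 := by
  rcases le_total (f x) 0 with hx | hx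
  · exact intermediate_value_Icc hxy hf ⟨hx, by linarith⟩
  · exact intermediate_value_Icc' hxy hf ⟨by linarith, hx⟩

end ContinuousOn

theorem setIntegral_pos_of_support_subset {X : Type*} [MeasurableSpace X] {μ : Measure X}
    {s : Set X} {f g : X → ℝ} (hf : 0 ≤ᵐ[μ.restrict s] f) (hg : 0 ≤ᵐ[μ.restrict s] g)
    (hfi : IntegrableOn f s μ) (hgi : IntegrableOn g s μ)
    (hfg : Function.support f ∩ s ⊆ Function.support g) (h : 0 < ∫ x in s, f x ∂μ) :
    0 < ∫ x in s, g x ∂μ := by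
  rw [setIntegral_pos_iff_support_of_nonneg_ae hf hfi] at h
  rw [setIntegral_pos_iff_support_of_nonneg_ae hg hgi]
  exact h.trans_le (measure_mono (subset_inter hfg inter_subset_right))

theorem IntervalIntegrable.mono_set_of_le {f : ℝ → ℝ} {a b x y : ℝ}
    (hf : IntervalIntegrable f volume a b) (hx : a ≤ x) (hxy : x ≤ y) (hy : y ≤ b) :
    IntervalIntegrable f volume x y :=
  hf.mono_set <|
    uIcc_subset_uIcc (mem_uIcc_of_le hx (hxy.trans hy)) (mem_uIcc_of_le (hx.trans hxy) hy)

theorem four_div_add_le_one_div_add_one_div {x y : ℝ} (hx : 0 < x) (hy : 0 < y) :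
    4 / (x + y) ≤ 1 / x + 1 / y := by
  rw [div_add_div _ _ hx.ne' hy.ne', div_le_div_iff₀ (by positivity) (by positivity)]
  nlinarith [sq_nonneg (x - y)]

section PositivePart

variable {f g : ℝ → ℝ} {p q M : ℝ}

theorem mul_le_mul_max_zero {r s : ℝ} (hs0 : 0 ≤ s) (hsM : s ≤ M) : r * s ≤ M * max r 0 :=
  calc r * s ≤ max r 0 * s := mul_le_mul_of_nonneg_right (le_max_left _ _) hs0
    _ ≤ max r 0 * M := mul_le_mul_of_nonneg_left hsM (le_max_right _ _)
    _ = M * max r 0 := mul_comm _ _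

theorem IntervalIntegrable.max_zero (hf : IntervalIntegrable f volume p q) :
    IntervalIntegrable (fun t => max (f t) 0) volume p q :=
  ⟨hf.1.pos_part, hf.2.pos_part⟩

theorem integral_mul_le_mul_integral_max_zero (hpq : p ≤ q)
    (hf : IntervalIntegrable f volume p q) (hg : ContinuousOn g (Icc p q))
    (hg0 : ∀ t ∈ Icc p q, 0 ≤ g t) (hgM : ∀ t ∈ Icc p q, g t ≤ M) :
    ∫ t in p..q, f t * g t ≤ M * ∫ t in p..q, max (f t) 0 := by
  rw [← intervalIntegral.integral_const_mul]
  exact integral_mono_on hpq (hf.mul_continuousOn (by rwa [uIcc_of_le hpq]))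
    (hf.max_zero.const_mul M) fun t ht => mul_le_mul_max_zero (hg0 t ht) (hgM t ht)

theorem integral_mul_lt_mul_integral_max_zero (hpq : p ≤ q)
    (hf : IntervalIntegrable f volume p q) (hg : ContinuousOn g (Icc p q))
    (hg0 : ∀ t ∈ Icc p q, 0 ≤ g t) (hgM : ∀ t ∈ Ioo p q, g t < M)
    (hpos : 0 < ∫ t in p..q, f t * g t) :
    ∫ t in p..q, f t * g t < M * ∫ t in p..q, max (f t) 0 := by
  have hg' : ContinuousOn g (uIcc p q) := by rwa [uIcc_of_le hpq]
  have hPg := hf.max_zero.mul_continuousOn hg'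
  have hPMg := hf.max_zero.mul_continuousOn (continuousOn_const (c := M) |>.sub hg')
  have hle : ∫ t in p..q, f t * g t ≤ ∫ t in p..q, max (f t) 0 * g t :=
    integral_mono_on hpq (hf.mul_continuousOn hg') hPg fun t ht =>
      mul_le_mul_of_nonneg_right (le_max_left _ _) (hg0 t ht)
  have hgap : 0 < ∫ t in p..q, max (f t) 0 * (M - g t) := by
    rw [integral_of_le hpq, integral_Ioc_eq_integral_Ioo]
    refine setIntegral_pos_of_support_subset (f := fun t => max (f t) 0 * g t)
      (ae_restrict_of_forall_mem measurableSet_Ioo fun t ht =>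
        mul_nonneg (le_max_right _ _) (hg0 t (Ioo_subset_Icc_self ht)))
      (ae_restrict_of_forall_mem measurableSet_Ioo fun t ht =>
        mul_nonneg (le_max_right _ _) (sub_nonneg.2 (hgM t ht).le))
      (hPg.1.mono_set Ioo_subset_Ioc_self) (hPMg.1.mono_set Ioo_subset_Ioc_self)
      (fun t ⟨ht, htI⟩ => mul_ne_zero (left_ne_zero_of_mul ht) (sub_ne_zero.2 (hgM t htI).ne'))
      ?_
    rw [← integral_Ioc_eq_integral_Ioo, ← integral_of_le hpq]
    exact hpos.trans_le hle
  have hsplit : ∫ t in p..q, max (f t) 0 * (M - g t)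
      = M * (∫ t in p..q, max (f t) 0) - ∫ t in p..q, max (f t) 0 * g t := by
    simp only [mul_sub]
    rw [integral_sub (hf.max_zero.mul_const M) hPg, intervalIntegral.integral_mul_const,
      mul_comm]
  linarith

end PositivePart

/-- Hill's equation `u'' + a u = 0` on `[c, d]`, with `u'` the derivative of `u`; the
second-order equation is only imposed off the countable set `s`, where `a` may jump. -/
structure IsHillSolutionOn (a : ℝ → ℝ) (s : Set ℝ) (c d : ℝ) (u u' : ℝ → ℝ) : Prop where
  countable : s.Countable
  hasDerivWithinAt : ∀ t ∈ Icc c d, HasDerivWithinAt u (u' t) (Icc c d) t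
  continuousOn_deriv : ContinuousOn u' (Icc c d)
  hasDerivWithinAt_deriv : ∀ t ∈ Icc c d \ s, HasDerivWithinAt u' (-(a t * u t)) (Icc c d) t

namespace IsHillSolutionOn

variable {a u u' : ℝ → ℝ} {s : Set ℝ} {c d : ℝ}

theorem continuousOn (h : IsHillSolutionOn a s c d u u') : ContinuousOn u (Icc c d) :=
  fun t ht => (h.hasDerivWithinAt t ht).continuousWithinAt

theorem hasDerivAt (h : IsHillSolutionOn a s c d u u') {t : ℝ} (ht : t ∈ Ioo c d) :
    HasDerivAt u (u' t) t :=
  (h.hasDerivWithinAt t (Ioo_subset_Icc_self ht)).hasDerivAt (Icc_mem_nhds ht.1 ht.2)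

theorem neg (h : IsHillSolutionOn a s c d u u') :
    IsHillSolutionOn a s c d (fun t => -u t) (fun t => -u' t) where
  countable := h.countable
  hasDerivWithinAt t ht := (h.hasDerivWithinAt t ht).neg
  continuousOn_deriv := h.continuousOn_deriv.neg
  hasDerivWithinAt_deriv t ht := by
    simpa only [mul_neg, neg_neg] using (h.hasDerivWithinAt_deriv t ht).fun_neg

theorem mono (h : IsHillSolutionOn a s c d u u') {c' d' : ℝ} (hc : c ≤ c') (hd : d' ≤ d) :
    IsHillSolutionOn a s c' d' u u' where
  countable := h.countable
  hasDerivWithinAt t ht :=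
    (h.hasDerivWithinAt t (Icc_subset_Icc hc hd ht)).mono (Icc_subset_Icc hc hd)
  continuousOn_deriv := h.continuousOn_deriv.mono (Icc_subset_Icc hc hd)
  hasDerivWithinAt_deriv t ht :=
    (h.hasDerivWithinAt_deriv t ⟨Icc_subset_Icc hc hd ht.1, ht.2⟩).mono (Icc_subset_Icc hc hd)

theorem integral_mul_eq (h : IsHillSolutionOn a s c d u u') (hcd : c ≤ d)
    (ha : IntervalIntegrable a volume c d) :
    ∫ t in c..d, a t * u t = u' c - u' d := by
  have hau := ha.mul_continuousOn (h.continuousOn.mono (uIcc_of_le hcd).le)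
  have := integral_eq_of_hasDerivAt_off_countable_of_le u' (fun t => -(a t * u t)) hcd
    h.countable h.continuousOn_deriv (fun t ht => (h.hasDerivWithinAt_deriv t
      ⟨Ioo_subset_Icc_self ht.1, ht.2⟩).hasDerivAt (Icc_mem_nhds ht.1.1 ht.1.2)) hau.neg
  rw [intervalIntegral.integral_neg] at this
  linarith

theorem one_div_add_one_div_lt_integral_max_zero (h : IsHillSolutionOn a s c d u u')
    (ha : IntervalIntegrable a volume c d) {τ : ℝ} (hτ : τ ∈ Ioo c d) (hc : u c = 0)
    (hd : u d = 0) (hu0 : ∀ t ∈ Icc c d, 0 ≤ u t) (hmax : IsMaxOn u (Icc c d) τ)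
    (hfirst : ∀ t ∈ Ico c τ, u t < u τ) :
    1 / (τ - c) + 1 / (d - τ) < ∫ t in c..d, max (a t) 0 := by
  obtain ⟨hcτ, hτd⟩ := hτ
  set M := u τ
  have hM : 0 < M := hc ▸ hfirst c ⟨le_rfl, hcτ⟩
  have hu'τ : u' τ = 0 :=
    (hmax.isLocalMax (Icc_mem_nhds hcτ hτd)).hasDerivAt_eq_zero (h.hasDerivAt ⟨hcτ, hτd⟩)
  obtain ⟨ζ₁, hζ₁, hslope₁⟩ := exists_hasDerivAt_eq_slope u u' hcτ
    (h.continuousOn.mono (Icc_subset_Icc_right hτd.le))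
    fun t ht => h.hasDerivAt ⟨ht.1, ht.2.trans hτd⟩
  obtain ⟨ζ₂, hζ₂, hslope₂⟩ := exists_hasDerivAt_eq_slope u u' hτd
    (h.continuousOn.mono (Icc_subset_Icc_left hcτ.le))
    fun t ht => h.hasDerivAt ⟨hcτ.trans ht.1, ht.2⟩
  have hleft : M / (τ - c) < M * ∫ t in ζ₁..τ, max (a t) 0 := by
    have hI : ∫ t in ζ₁..τ, a t * u t = M / (τ - c) := by
      rw [(h.mono hζ₁.1.le hτd.le).integral_mul_eq hζ₁.2.le
        (ha.mono_set_of_le hζ₁.1.le hζ₁.2.le hτd.le), hslope₁, hu'τ, hc]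
      ring
    rw [← hI]
    exact integral_mul_lt_mul_integral_max_zero hζ₁.2.le
      (ha.mono_set_of_le hζ₁.1.le hζ₁.2.le hτd.le)
      (h.continuousOn.mono (Icc_subset_Icc hζ₁.1.le hτd.le))
      (fun t ht => hu0 t ⟨hζ₁.1.le.trans ht.1, ht.2.trans hτd.le⟩)
      (fun t ht => hfirst t ⟨hζ₁.1.le.trans ht.1.le, ht.2⟩)
      (hI ▸ div_pos hM (sub_pos.2 hcτ))
  have hright : M / (d - τ) ≤ M * ∫ t in τ..ζ₂, max (a t) 0 := by
    have hI : ∫ t in τ..ζ₂, a t * u t = M / (d - τ) := by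
      rw [(h.mono hcτ.le hζ₂.2.le).integral_mul_eq hζ₂.1.le
        (ha.mono_set_of_le hcτ.le hζ₂.1.le hζ₂.2.le), hslope₂, hu'τ, hd]
      ring
    rw [← hI]
    exact integral_mul_le_mul_integral_max_zero hζ₂.1.le
      (ha.mono_set_of_le hcτ.le hζ₂.1.le hζ₂.2.le)
      (h.continuousOn.mono (Icc_subset_Icc hcτ.le hζ₂.2.le))
      (fun t ht => hu0 t ⟨hcτ.le.trans ht.1, ht.2.trans hζ₂.2.le⟩)
      (fun t ht => hmax ⟨hcτ.le.trans ht.1, ht.2.trans hζ₂.2.le⟩)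
  have hsub : (∫ t in ζ₁..τ, max (a t) 0) + ∫ t in τ..ζ₂, max (a t) 0
      ≤ ∫ t in c..d, max (a t) 0 := by
    rw [integral_add_adjacent_intervals (ha.mono_set_of_le hζ₁.1.le hζ₁.2.le hτd.le).max_zero
      (ha.mono_set_of_le hcτ.le hζ₂.1.le hζ₂.2.le).max_zero]
    exact integral_mono_interval hζ₁.1.le (hζ₁.2.trans hζ₂.1).le hζ₂.2.le
      (Filter.Eventually.of_forall fun t => le_max_right _ _) ha.max_zero
  refine lt_of_mul_lt_mul_left ?_ hM.le
  rw [mul_add, mul_one_div, mul_one_div]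
  linarith [mul_le_mul_of_nonneg_left hsub hM.le]

theorem four_div_lt_integral_max_zero_of_pos (h : IsHillSolutionOn a s c d u u')
    (ha : IntervalIntegrable a volume c d) (hc : u c = 0) (hd : u d = 0)
    (hpos : ∃ t ∈ Icc c d, 0 < u t) :
    4 / (d - c) < ∫ t in c..d, max (a t) 0 := by
  obtain ⟨t₀, ht₀, hut₀⟩ := hpos
  obtain ⟨τ₁, hτ₁, hmax⟩ :=
    isCompact_Icc.exists_isMaxOn (nonempty_Icc.2 (ht₀.1.trans ht₀.2)) h.continuousOn
  have hM : 0 < u τ₁ := hut₀.trans_le (hmax ht₀)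
  obtain ⟨τ, hτ, huτ, hfirst⟩ :=
    (h.continuousOn.mono (Icc_subset_Icc_right hτ₁.2)).exists_first_eq hτ₁.1 (hc ▸ hM) le_rfl
  have hτd : τ ≤ d := hτ.2.trans hτ₁.2
  obtain ⟨c₁, hc₁, huc₁, hleft⟩ :=
    (h.continuousOn.mono (Icc_subset_Icc_right hτd)).fun_neg.exists_last_eq (v := 0) hτ.1.le
      (by simp [hc]) (by simpa [huτ] using hM)
  obtain ⟨d₁, hd₁, hud₁, hright⟩ :=
    (h.continuousOn.mono (Icc_subset_Icc_left hτ.1.le)).fun_neg.exists_first_eq (v := 0) hτd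
      (by simpa [huτ] using hM) (by simp [hd])
  have hu0 : ∀ t ∈ Icc c₁ d₁, 0 ≤ u t := by
    rintro t ⟨ht₁, ht₂⟩
    rcases ht₁.eq_or_lt with rfl | ht₁
    · exact (neg_eq_zero.1 huc₁).ge
    rcases le_or_gt t τ with htτ | htτ
    · exact (neg_lt_zero.1 (hleft t ⟨ht₁, htτ⟩)).le
    rcases ht₂.eq_or_lt with rfl | ht₂
    · exact (neg_eq_zero.1 hud₁).ge
    · exact (neg_lt_zero.1 (hright t ⟨htτ.le, ht₂⟩)).le
  have hhump := (h.mono hc₁.1 hd₁.2).one_div_add_one_div_lt_integral_max_zero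
    (ha.mono_set_of_le hc₁.1 (hc₁.2.trans hd₁.1).le hd₁.2) ⟨hc₁.2, hd₁.1⟩
    (neg_eq_zero.1 huc₁) (neg_eq_zero.1 hud₁) hu0
    (fun t ht => huτ ▸ hmax (Icc_subset_Icc hc₁.1 hd₁.2 ht))
    (fun t ht => huτ ▸ hfirst t ⟨hc₁.1.trans ht.1, ht.2⟩)
  calc 4 / (d - c) ≤ 4 / (d₁ - c₁) :=
        div_le_div_of_nonneg_left zero_le_four (by linarith [hc₁.2, hd₁.1])
          (by linarith [hc₁.1, hd₁.2])
    _ ≤ 1 / (τ - c₁) + 1 / (d₁ - τ) := by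
        simpa using four_div_add_le_one_div_add_one_div (sub_pos.2 hc₁.2) (sub_pos.2 hd₁.1)
    _ < ∫ t in c₁..d₁, max (a t) 0 := hhump
    _ ≤ ∫ t in c..d, max (a t) 0 :=
        integral_mono_interval hc₁.1 (hc₁.2.trans hd₁.1).le hd₁.2
          (Filter.Eventually.of_forall fun t => le_max_right _ _) ha.max_zero

theorem four_div_lt_integral_max_zero (h : IsHillSolutionOn a s c d u u')
    (ha : IntervalIntegrable a volume c d) (hc : u c = 0) (hd : u d = 0)
    (hne : ∃ t ∈ Icc c d, u t ≠ 0) :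
    4 / (d - c) < ∫ t in c..d, max (a t) 0 := by
  obtain ⟨t₀, ht₀, hut₀⟩ := hne
  rcases hut₀.lt_or_gt with hneg | hpos
  · exact h.neg.four_div_lt_integral_max_zero_of_pos ha (by simp [hc]) (by simp [hd])
      ⟨t₀, ht₀, neg_pos.2 hneg⟩
  · exact h.four_div_lt_integral_max_zero_of_pos ha hc hd ⟨t₀, ht₀, hpos⟩

end IsHillSolutionOn

/-- Extension of `f` from `[0, T]` to `[0, 2T]` by `f (t + T) = -f t`. -/
noncomputable def antiperiodicExt (T : ℝ) (f : ℝ → ℝ) (t : ℝ) : ℝ :=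
  if t ≤ T then f t else -f (t - T)

/-- Extension of `f` from `[0, T]` to `[0, 2T]` by `f (t + T) = f t`. -/
noncomputable def periodicExt (T : ℝ) (f : ℝ → ℝ) (t : ℝ) : ℝ :=
  if t ≤ T then f t else f (t - T)

section Extension

variable {T : ℝ} {f f' : ℝ → ℝ}

theorem antiperiodicExt_of_le {t : ℝ} (ht : t ≤ T) : antiperiodicExt T f t = f t := if_pos ht

theorem eqOn_antiperiodicExt_Ici (h0 : f 0 = -f T) :
    EqOn (antiperiodicExt T f) (fun t => -f (t - T)) (Ici T) := by
  intro t (ht : T ≤ t)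
  show (if t ≤ T then f t else -f (t - T)) = -f (t - T)
  split_ifs with h
  · rw [le_antisymm h ht, sub_self, h0, neg_neg]
  · rfl

theorem antiperiodicExt_add (h0 : f 0 = -f T) {t : ℝ} (ht : 0 ≤ t) :
    antiperiodicExt T f (t + T) = -f t := by
  simpa using eqOn_antiperiodicExt_Ici h0 (show T ≤ t + T by linarith)

theorem exists_antiperiodicExt_ne_zero (h0 : f 0 = -f T) {z : ℝ} (hz : z ∈ Icc 0 T)
    (hne : ∃ t ∈ Icc 0 T, f t ≠ 0) : ∃ t ∈ Icc z (z + T), antiperiodicExt T f t ≠ 0 := by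
  obtain ⟨t, ht, hft⟩ := hne
  rcases le_or_gt z t with hzt | htz
  · exact ⟨t, ⟨hzt, by linarith [ht.2, hz.1]⟩, by rwa [antiperiodicExt_of_le ht.2]⟩
  · exact ⟨t + T, ⟨by linarith [ht.1, hz.2], by linarith⟩,
      by rwa [antiperiodicExt_add h0 ht.1, neg_ne_zero]⟩

theorem mapsTo_sub_Icc : MapsTo (fun t => t - T) (Icc T (T + T)) (Icc 0 T) :=
  fun t ht => ⟨by linarith [ht.1], by linarith [ht.2]⟩

theorem continuousOn_antiperiodicExt (hT : 0 ≤ T) (hf : ContinuousOn f (Icc 0 T))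
    (h0 : f 0 = -f T) : ContinuousOn (antiperiodicExt T f) (Icc 0 (T + T)) := by
  rw [← Icc_union_Icc_eq_Icc hT (by linarith)]
  refine ContinuousOn.union_of_isClosed ?_ ?_ isClosed_Icc isClosed_Icc
  · exact hf.congr fun t ht => antiperiodicExt_of_le ht.2
  · exact (hf.comp (continuousOn_id.sub continuousOn_const) mapsTo_sub_Icc).neg.congr
      fun t ht => eqOn_antiperiodicExt_Ici h0 ht.1

theorem hasDerivWithinAt_antiperiodicExt (hT : 0 ≤ T)
    (hf : ∀ t ∈ Icc 0 T, HasDerivWithinAt f (f' t) (Icc 0 T) t) (h0 : f 0 = -f T) {t : ℝ}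
    (ht : t ∈ Icc 0 (T + T)) (htT : t ≠ T ∨ f' 0 = -f' T) :
    HasDerivWithinAt (antiperiodicExt T f) (antiperiodicExt T f' t) (Icc 0 (T + T)) t := by
  rw [← Icc_union_Icc_eq_Icc hT (by linarith)]
  refine HasDerivWithinAt.union ?_ ?_
  · by_cases h : t ≤ T
    · rw [antiperiodicExt_of_le h]
      exact (hf t ⟨ht.1, h⟩).congr (fun s hs => antiperiodicExt_of_le hs.2)
        (antiperiodicExt_of_le h)
    · exact HasFDerivWithinAt.of_notMem_closure (by rw [closure_Icc]; exact fun hm => h hm.2)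
  · by_cases h : T ≤ t
    · have hval : antiperiodicExt T f' t = -f' (t - T) := by
        rcases htT with htT | h0'
        · exact if_neg (not_le.2 (h.lt_of_ne' htT))
        · exact eqOn_antiperiodicExt_Ici h0' h
      have hcomp := ((hf (t - T) (mapsTo_sub_Icc ⟨h, ht.2⟩)).comp t
        ((hasDerivWithinAt_id t _).sub_const T) mapsTo_sub_Icc).neg
      rw [hval]
      simpa using hcomp.congr (fun s hs => eqOn_antiperiodicExt_Ici h0 hs.1)
        (eqOn_antiperiodicExt_Ici h0 h)
    · exact HasFDerivWithinAt.of_notMem_closure (by rw [closure_Icc]; exact fun hm => h hm.1)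

theorem eqOn_periodicExt_Iic : EqOn (periodicExt T f) f (Iic T) := fun _ ht => if_pos ht

theorem eqOn_periodicExt_Ioi : EqOn (periodicExt T f) (fun t => f (t - T)) (Ioi T) :=
  fun _ ht => if_neg (not_le.2 ht)

theorem intervalIntegrable_periodicExt (hf : IntervalIntegrable f volume 0 T) {z : ℝ}
    (hz : z ∈ Icc 0 T) : IntervalIntegrable (periodicExt T f) volume z (z + T) := by
  refine IntervalIntegrable.trans (b := T) ?_ ?_
  · refine (hf.mono_set_of_le hz.1 hz.2 le_rfl).congr fun t ht => ?_
    rw [uIoc_of_le hz.2] at ht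
    exact (eqOn_periodicExt_Iic ht.2).symm
  · have h := (hf.mono_set_of_le le_rfl hz.1 hz.2).comp_sub_right T
    rw [zero_add] at h
    refine h.congr fun t ht => ?_
    rw [uIoc_of_le (by linarith [hz.1])] at ht
    exact (eqOn_periodicExt_Ioi ht.1).symm

theorem integral_periodicExt (hf : IntervalIntegrable f volume 0 T) {z : ℝ} (hz : z ∈ Icc 0 T) :
    ∫ t in z..z + T, periodicExt T f t = ∫ t in 0..T, f t := by
  have hP := intervalIntegrable_periodicExt hf hz
  have hT : 0 ≤ T := hz.1.trans hz.2
  rw [← integral_add_adjacent_intervals (hP.mono_set_of_le le_rfl hz.2 (by linarith [hz.1]))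
      (hP.mono_set_of_le hz.2 (by linarith [hz.1]) le_rfl),
    ← integral_add_adjacent_intervals (b := z) (hf.mono_set_of_le le_rfl hz.1 hz.2)
      (hf.mono_set_of_le hz.1 hz.2 le_rfl), add_comm]
  congr 1
  · rw [integral_congr_ae (g := fun t => f (t - T)) (Filter.Eventually.of_forall fun t ht =>
      eqOn_periodicExt_Ioi (by rw [uIoc_of_le (by linarith [hz.1])] at ht; exact ht.1)),
      integral_comp_sub_right]
    simp
  · refine integral_congr fun t ht => eqOn_periodicExt_Iic ?_
    rw [uIcc_of_le hz.2] at ht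
    exact ht.2

end Extension

theorem isHillSolutionOn_antiperiodicExt {T : ℝ} {a u u' : ℝ → ℝ} (hT : 0 ≤ T)
    (hu : ∀ t ∈ Icc 0 T, HasDerivWithinAt u (u' t) (Icc 0 T) t)
    (hu' : ∀ t ∈ Icc 0 T, HasDerivWithinAt u' (-(a t * u t)) (Icc 0 T) t)
    (h0 : u 0 = -u T) (h0' : u' 0 = -u' T) :
    IsHillSolutionOn (periodicExt T a) {T} 0 (T + T) (antiperiodicExt T u)
      (antiperiodicExt T u') where
  countable := countable_singleton T
  hasDerivWithinAt t ht := hasDerivWithinAt_antiperiodicExt hT hu h0 ht (Or.inr h0')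
  continuousOn_deriv :=
    continuousOn_antiperiodicExt hT (fun t ht => (hu' t ht).continuousWithinAt) h0'
  hasDerivWithinAt_deriv t ht := by
    convert hasDerivWithinAt_antiperiodicExt hT hu' h0' ht.1 (Or.inl ht.2) using 1
    simp only [antiperiodicExt, periodicExt]
    split_ifs <;> ring

theorem stmt12 (T : ℝ) (hT : 0 < T) (a : ℝ → ℝ)
    (ha : ContinuousOn a (Set.Icc 0 T))
    (u u' : ℝ → ℝ)
    (hd1 : ∀ t ∈ Set.Icc (0:ℝ) T, HasDerivWithinAt u (u' t) (Set.Icc 0 T) t)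
    (hd2 : ∀ t ∈ Set.Icc (0:ℝ) T, HasDerivWithinAt u' (-(a t * u t)) (Set.Icc 0 T) t)
    (hbc1 : u 0 + u T = 0) (hbc2 : u' 0 + u' T = 0)
    (hne : ∃ t ∈ Set.Icc (0:ℝ) T, u t ≠ 0) :
    4 / T < ∫ t in (0:ℝ)..T, max (a t) 0 := by
  have hu : ContinuousOn u (Icc 0 T) := fun t ht => (hd1 t ht).continuousWithinAt
  obtain ⟨z, hz, huz⟩ := hu.exists_eq_zero_of_add_eq_zero hT.le hbc1
  have hu0 : u 0 = -u T := by linarith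
  have haT : IntervalIntegrable a volume 0 T := ha.intervalIntegrable_of_Icc hT.le
  have hsol := (isHillSolutionOn_antiperiodicExt hT.le hd1 hd2 hu0 (by linarith)).mono hz.1
    (by linarith [hz.2] : z + T ≤ T + T)
  have key := hsol.four_div_lt_integral_max_zero (intervalIntegrable_periodicExt haT hz)
    (by rwa [antiperiodicExt_of_le hz.2]) (by rw [antiperiodicExt_add hu0 hz.1, huz, neg_zero])
    (exists_antiperiodicExt_ne_zero hu0 hz hne)
  have hmax : (fun t => max (periodicExt T a t) 0) = periodicExt T fun t => max (a t) 0 :=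
    funext fun t => apply_ite (max · 0) _ _ _
  rwa [add_sub_cancel_left, hmax, integral_periodicExt haT.max_zero hz] at key
end

section
/- Let T > 0, 1 < p < ∞, and let u₀ be a minimizer of I_p(v) = (∫₀ᵀ v'²)/(∫₀ᵀ |v|^{2p/(p-1)})^{(p-1)/p} over the nonzero elements of X_p^per = { v ∈ H^1(0,T) : v(0)=v(T), ∫₀ᵀ |v|^{2/(p-1)} v = 0 }, with minimum value m_p. Then u₀ is a weak solution of the Euler–Lagrange problem u₀'' + A_p(u₀)|u₀|^{2/(p-1)} u₀ = 0 with periodic boundary conditions u₀(0)=u₀(T), u₀'(0)=u₀'(T), where A_p(u₀) = m_p (∫₀ᵀ |u₀|^{2p/(p-1)})^{-1/p}. -/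
/-!
Fix a periodic test function `z` and perturb `u₀` in the two-parameter family
`u₀ + s • z + c`. With `q = 2 / (p - 1)`, the constraint `φ(v) = ∫ |v| ^ q * v` has
`∂φ/∂c = (q + 1) ∫ |u₀| ^ q > 0` at `u₀`, and on the constraint curve the functional
`H(v) = ∫ v' ^ 2 - m (∫ |v| ^ (q + 2)) ^ ((p - 1) / p)` attains its minimum `0` at `(s, c) = 0`,
by minimality of `m`. The Lagrange multiplier rule with one constraint therefore gives
`∇H = λ ∇φ`; since `∂H/∂c` is a multiple of `φ(u₀) = 0`, the multiplier vanishes and `∂H/∂s = 0`,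
which is the weak Euler–Lagrange equation. Testing it against primitives of mean-zero functions
(du Bois-Reymond) shows that `u₀' + A_p(u₀) ∫₀ᵗ |u₀| ^ q u₀` is constant, hence `u₀'(0) = u₀'(T)`.
-/

open Set MeasureTheory Filter Topology ContinuousLinearMap

theorem hasDerivAt_abs_rpow_mul_self {q : ℝ} (hq : 0 < q) (x : ℝ) :
    HasDerivAt (fun y : ℝ => |y| ^ q * y) ((q + 1) * |x| ^ q) x := by
  rcases eq_or_ne x 0 with rfl | hx
  · rw [hasDerivAt_iff_tendsto_slope_zero]
    have hlim : Tendsto (fun t : ℝ => |t| ^ q) (𝓝[≠] 0) (𝓝 0) := by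
      simpa [Real.zero_rpow hq.ne'] using
        ((continuous_abs.rpow_const fun _ => Or.inr hq.le).tendsto 0).mono_left
          (nhdsWithin_le_nhds (s := {0}ᶜ))
    refine (hlim.congr' ?_).trans_eq (by simp [Real.zero_rpow hq.ne'])
    filter_upwards [self_mem_nhdsWithin] with t (ht : t ≠ 0)
    simp only [zero_add, abs_zero, mul_zero, sub_zero, smul_eq_mul]
    field_simp
  · have := ((hasDerivAt_abs hx).rpow_const (p := q) (Or.inl (abs_ne_zero.2 hx))).mul
      (hasDerivAt_id x)
    refine this.congr_deriv ?_
    rw [Real.rpow_sub_one (abs_ne_zero.2 hx), id,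
      show (SignType.sign x : ℝ) * q * (|x| ^ q / |x|) * x =
        q * (SignType.sign x * x) * |x| ^ q / |x| by ring,
      sign_mul_self]
    field_simp

theorem ContinuousOn.exists_continuous_eqOn_Icc {α β : Type*} [LinearOrder α] [TopologicalSpace α]
    [OrderTopology α] [TopologicalSpace β] {a b : α} (hab : a ≤ b) {f : α → β}
    (hf : ContinuousOn f (Icc a b)) : ∃ g : α → β, Continuous g ∧ EqOn g f (Icc a b) :=
  ⟨IccExtend hab ((Icc a b).domRestrict f), hf.domRestrict.Icc_extend',
    fun _ ht => IccExtend_of_mem hab _ ht⟩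

theorem hasFDerivAt_integral_comp_affine {K K' : ℝ → ℝ} (hK : ∀ y, HasDerivAt K (K' y) y)
    (hK' : Continuous K') {u z w : ℝ → ℝ} (hu : Continuous u) (hz : Continuous z)
    (hw : Continuous w) (a b : ℝ) (x₀ : ℝ × ℝ) :
    HasFDerivAt (fun x : ℝ × ℝ => ∫ t in a..b, K (u t + x.1 * z t + x.2 * w t))
      ((∫ t in a..b, K' (u t + x₀.1 * z t + x₀.2 * w t) * z t) • fst ℝ ℝ ℝ +
        (∫ t in a..b, K' (u t + x₀.1 * z t + x₀.2 * w t) * w t) • snd ℝ ℝ ℝ) x₀ := by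
  have hKc : Continuous K := continuous_iff_continuousAt.2 fun y => (hK y).continuousAt
  set F' : ℝ × ℝ → ℝ → ℝ × ℝ →L[ℝ] ℝ := fun x t =>
    (K' (u t + x.1 * z t + x.2 * w t) * z t) • fst ℝ ℝ ℝ +
      (K' (u t + x.1 * z t + x.2 * w t) * w t) • snd ℝ ℝ ℝ
  have hF'c : Continuous fun p : (ℝ × ℝ) × ℝ => F' p.1 p.2 := by fun_prop
  obtain ⟨C, hC⟩ := ((isCompact_closedBall x₀ 1).prod (isCompact_uIcc (a := a) (b := b))
    ).exists_bound_of_continuousOn hF'c.continuousOn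
  have hderiv := intervalIntegral.hasFDerivAt_integral_of_dominated_of_fderiv_le
    (μ := volume) (F := fun x t => K (u t + x.1 * z t + x.2 * w t)) (F' := F')
    (bound := fun _ => C) (Metric.closedBall_mem_nhds x₀ one_pos)
    (Eventually.of_forall fun x => by fun_prop)
    ((by fun_prop : Continuous _).intervalIntegrable _ _) (by fun_prop)
    (ae_of_all _ fun t ht x hx => by simpa using hC (x, t) ⟨hx, Ioc_subset_Icc_self ht⟩)
    intervalIntegrable_const
    (ae_of_all _ fun t _ x _ => by
      have := (hK (u t + x.1 * z t + x.2 * w t)).comp_hasFDerivAt x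
        ((((hasFDerivAt_fst (𝕜 := ℝ) (p := x)).mul_const (z t)).const_add (u t)).add
          ((hasFDerivAt_snd (𝕜 := ℝ) (p := x)).mul_const (w t)))
      exact this.congr_fderiv (by ext <;> simp [F']))
  have hF'int : ∫ t in a..b, F' x₀ t =
      (∫ t in a..b, K' (u t + x₀.1 * z t + x₀.2 * w t) * z t) • fst ℝ ℝ ℝ +
        (∫ t in a..b, K' (u t + x₀.1 * z t + x₀.2 * w t) * w t) • snd ℝ ℝ ℝ := by
    rw [intervalIntegral.integral_add ((by fun_prop : Continuous _).intervalIntegrable a b)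
      ((by fun_prop : Continuous _).intervalIntegrable a b),
      intervalIntegral.integral_smul_const, intervalIntegral.integral_smul_const]
  rwa [hF'int] at hderiv

theorem hasStrictFDerivAt_integral_comp_affine_of_continuous {K K' : ℝ → ℝ}
    (hK : ∀ y, HasDerivAt K (K' y) y) (hK' : Continuous K') {u z w : ℝ → ℝ} (hu : Continuous u)
    (hz : Continuous z) (hw : Continuous w) (a b : ℝ) :
    HasStrictFDerivAt (fun x : ℝ × ℝ => ∫ t in a..b, K (u t + x.1 * z t + x.2 * w t))
      ((∫ t in a..b, K' (u t) * z t) • fst ℝ ℝ ℝ + (∫ t in a..b, K' (u t) * w t) • snd ℝ ℝ ℝ)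
      0 := by
  have := hasStrictFDerivAt_of_hasFDerivAt_of_continuousAt (x := 0)
    (Eventually.of_forall (hasFDerivAt_integral_comp_affine hK hK' hu hz hw a b))
    (by fun_prop : Continuous _).continuousAt
  simpa using this

theorem hasStrictFDerivAt_integral_comp_affine {K K' : ℝ → ℝ}
    (hK : ∀ y, HasDerivAt K (K' y) y) (hK' : Continuous K') {u z w : ℝ → ℝ} {a b : ℝ}
    (hab : a ≤ b) (hu : ContinuousOn u (Icc a b)) (hz : ContinuousOn z (Icc a b))
    (hw : ContinuousOn w (Icc a b)) :
    HasStrictFDerivAt (fun x : ℝ × ℝ => ∫ t in a..b, K (u t + x.1 * z t + x.2 * w t))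
      ((∫ t in a..b, K' (u t) * z t) • fst ℝ ℝ ℝ + (∫ t in a..b, K' (u t) * w t) • snd ℝ ℝ ℝ)
      0 := by
  obtain ⟨U, hUc, hU⟩ := hu.exists_continuous_eqOn_Icc hab
  obtain ⟨Z, hZc, hZ⟩ := hz.exists_continuous_eqOn_Icc hab
  obtain ⟨W, hWc, hW⟩ := hw.exists_continuous_eqOn_Icc hab
  have hcongr : ∀ f : ℝ → ℝ → ℝ → ℝ,
      ∫ t in a..b, f (U t) (Z t) (W t) = ∫ t in a..b, f (u t) (z t) (w t) :=
    fun f => intervalIntegral.integral_congr fun t ht => by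
      rw [uIcc_of_le hab] at ht
      simp only [hU ht, hZ ht, hW ht]
  have := hasStrictFDerivAt_integral_comp_affine_of_continuous hK hK' hUc hZc hWc a b
  simp only [hcongr (fun u z w => K' u * z), hcongr (fun u z w => K' u * w)] at this
  convert this using 2 with x
  exact (hcongr fun u z w => K (u + x.1 * z + x.2 * w)).symm

theorem IsLocalExtrOn.eq_zero_of_hasStrictFDerivAt {E : Type*} [NormedAddCommGroup E]
    [NormedSpace ℝ E] [CompleteSpace E] {f g : E → ℝ} {f' g' : StrongDual ℝ E} {x₀ : E} {c : ℝ}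
    (hextr : IsLocalExtrOn f {x | g x = c} x₀) (hf : HasStrictFDerivAt f f' x₀)
    (hg : HasStrictFDerivAt g g' x₀) (hgx₀ : g x₀ = c) {v : E} (hgv : g' v ≠ 0)
    (hfv : f' v = 0) : f' = 0 := by
  subst hgx₀
  obtain ⟨a, b, hab, hsum⟩ := hextr.exists_multipliers_of_hasStrictFDerivAt_1d hg hf
  have ha : a = 0 := by
    simpa [hfv, hgv] using DFunLike.congr_fun hsum v
  have hb : b ≠ 0 := fun hb => hab (by simp [ha, hb])
  simpa [ha, hb] using hsum

theorem integral_abs_rpow_pos {u : ℝ → ℝ} {a b s : ℝ} (hab : a < b) (hs : 0 ≤ s)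
    (hu : ContinuousOn u (Icc a b)) {t₀ : ℝ} (ht₀ : t₀ ∈ Icc a b) (hut₀ : u t₀ ≠ 0) :
    0 < ∫ t in a..b, |u t| ^ s :=
  intervalIntegral.integral_pos hab (hu.abs.rpow_const fun _ _ => Or.inr hs)
    (fun _ _ => Real.rpow_nonneg (abs_nonneg _) _)
    ⟨t₀, ht₀, Real.rpow_pos_of_pos (abs_pos.2 hut₀) _⟩

theorem ContinuousOn.hasDerivWithinAt_integral_Icc {f : ℝ → ℝ} {a b : ℝ}
    (hf : ContinuousOn f (Icc a b)) {t : ℝ} (ht : t ∈ Icc a b) :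
    HasDerivWithinAt (fun s => ∫ r in a..s, f r) (f t) (Icc a b) t := by
  have : Fact (t ∈ Icc a b) := ⟨ht⟩
  refine intervalIntegral.integral_hasDerivWithinAt_right
    (hf.mono ?_).intervalIntegrable (hf.stronglyMeasurableAtFilter_nhdsWithin measurableSet_Icc t)
    (hf t ht)
  rw [uIcc_of_le ht.1]
  exact Icc_subset_Icc_right ht.2

theorem eqOn_of_forall_integral_mul_deriv_eq_zero {f : ℝ → ℝ} {a b : ℝ} (hab : a < b)
    (hf : ContinuousOn f (Icc a b))
    (h : ∀ z z' : ℝ → ℝ, (∀ t ∈ Icc a b, HasDerivWithinAt z (z' t) (Icc a b) t) →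
      ContinuousOn z' (Icc a b) → z a = 0 → z b = 0 → ∫ t in a..b, f t * z' t = 0) :
    EqOn f (fun _ => (∫ t in a..b, f t) / (b - a)) (Icc a b) := by
  set c := (∫ t in a..b, f t) / (b - a) with hc
  have hint : ∀ {g : ℝ → ℝ}, ContinuousOn g (Icc a b) → IntervalIntegrable g volume a b :=
    fun hg => hg.intervalIntegrable_of_Icc hab.le
  have hfc : ContinuousOn (fun t => f t - c) (Icc a b) := hf.sub continuousOn_const
  have hmean : ∫ t in a..b, (f t - c) = 0 := by
    rw [intervalIntegral.integral_sub (hint hf) intervalIntegrable_const,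
      intervalIntegral.integral_const, smul_eq_mul, hc, mul_div_cancel₀ _ (sub_pos.2 hab).ne',
      sub_self]
  have hfc_sq : ∫ t in a..b, (f t - c) ^ 2 = 0 := by
    have hz := h (fun s => ∫ r in a..s, (f r - c)) (fun t => f t - c)
      (fun t ht => hfc.hasDerivWithinAt_integral_Icc ht) hfc (by simp) hmean
    calc ∫ t in a..b, (f t - c) ^ 2
        = (∫ t in a..b, f t * (f t - c)) - c * ∫ t in a..b, (f t - c) := by
          rw [← intervalIntegral.integral_const_mul, ← intervalIntegral.integral_sub
            (hint (g := fun t => f t * (f t - c)) (hf.mul hfc))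
            (hint (g := fun t => c * (f t - c)) (continuousOn_const.mul hfc))]
          congr 1 with t
          ring
      _ = 0 := by rw [hz, hmean, mul_zero, sub_zero]
  intro t ht
  by_contra hne
  have hpos := intervalIntegral.integral_pos hab (hfc.pow 2) (fun _ _ => sq_nonneg _)
    ⟨t, ht, sq_pos_of_ne_zero (sub_ne_zero.2 hne)⟩
  exact hpos.ne' hfc_sq

theorem eq_of_forall_integral_mul_deriv_eq {f g : ℝ → ℝ} {a b : ℝ} (hab : a < b)
    (hf : ContinuousOn f (Icc a b)) (hg : ContinuousOn g (Icc a b))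
    (h : ∀ z z' : ℝ → ℝ, (∀ t ∈ Icc a b, HasDerivWithinAt z (z' t) (Icc a b) t) →
      ContinuousOn z' (Icc a b) → z a = z b →
      ∫ t in a..b, f t * z' t = ∫ t in a..b, g t * z t) :
    f a = f b := by
  have hint : ∀ {φ : ℝ → ℝ}, ContinuousOn φ (Icc a b) → IntervalIntegrable φ volume a b :=
    fun hφ => hφ.intervalIntegrable_of_Icc hab.le
  set W := fun s => ∫ r in a..s, g r
  have hW : ∀ t ∈ Icc a b, HasDerivWithinAt W (g t) (Icc a b) t :=
    fun t ht => hg.hasDerivWithinAt_integral_Icc ht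
  have hWc : ContinuousOn W (Icc a b) := fun t ht => (hW t ht).continuousWithinAt
  have hWb : W b = 0 := by
    simpa [W] using (h (fun _ => 1) (fun _ => 0) (fun t _ => hasDerivWithinAt_const _ _ _)
      continuousOn_const rfl).symm
  have hconst := eqOn_of_forall_integral_mul_deriv_eq_zero hab (hf.add hWc)
    fun z z' hz hz' hza hzb => by
      have hparts := intervalIntegral.integral_deriv_mul_eq_sub_of_hasDerivWithinAt
        (by rwa [uIcc_of_le hab.le]) (by rwa [uIcc_of_le hab.le] : ∀ t ∈ uIcc a b,
          HasDerivWithinAt z (z' t) (uIcc a b) t) (hint hg) (hint hz')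
      rw [hza, hzb, mul_zero, mul_zero, sub_zero] at hparts
      have hzc : ContinuousOn z (Icc a b) := fun t ht => (hz t ht).continuousWithinAt
      calc ∫ t in a..b, (f + W) t * z' t
          = (∫ t in a..b, f t * z' t) + ∫ t in a..b, W t * z' t := by
            simp only [Pi.add_apply, add_mul]
            exact intervalIntegral.integral_add (hint (hf.mul hz')) (hint (hWc.mul hz'))
        _ = (∫ t in a..b, g t * z t) + ∫ t in a..b, W t * z' t := by
            rw [h z z' hz hz' (hza.trans hzb.symm)]
        _ = 0 := (intervalIntegral.integral_add (hint (hg.mul hzc)) (hint (hWc.mul hz'))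
            ).symm.trans hparts
  have := (hconst ⟨le_rfl, hab.le⟩).trans (hconst ⟨hab.le, le_rfl⟩).symm
  simpa [W, hWb] using this

theorem isLocalMinOn_of_isMinimizer {T p : ℝ} (hT : 0 < T) (hp : 1 < p)
    {u₀ u₀' z z' : ℝ → ℝ} {m : ℝ}
    (hderiv : ∀ t ∈ Icc (0:ℝ) T, HasDerivWithinAt u₀ (u₀' t) (Icc 0 T) t)
    (hcont : ContinuousOn u₀' (Icc 0 T)) (hbc : u₀ 0 = u₀ T)
    {t₀ : ℝ} (ht₀ : t₀ ∈ Icc 0 T) (hut₀ : u₀ t₀ ≠ 0)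
    (hm : m * (∫ t in (0:ℝ)..T, |u₀ t| ^ (2 * p / (p - 1))) ^ ((p - 1) / p) =
      ∫ t in (0:ℝ)..T, (u₀' t) ^ 2)
    (hmin : ∀ v v' : ℝ → ℝ,
      (∀ t ∈ Icc (0:ℝ) T, HasDerivWithinAt v (v' t) (Icc 0 T) t) →
      ContinuousOn v' (Icc 0 T) → v 0 = v T →
      (∫ t in (0:ℝ)..T, |v t| ^ (2 / (p - 1)) * v t) = 0 →
      (∃ t ∈ Icc (0:ℝ) T, v t ≠ 0) →
      m ≤ (∫ t in (0:ℝ)..T, (v' t) ^ 2) /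
        (∫ t in (0:ℝ)..T, |v t| ^ (2 * p / (p - 1))) ^ ((p - 1) / p))
    (hz : ∀ t ∈ Icc (0:ℝ) T, HasDerivWithinAt z (z' t) (Icc 0 T) t)
    (hz' : ContinuousOn z' (Icc 0 T)) (hzper : z 0 = z T) :
    IsLocalMinOn
      (fun x : ℝ × ℝ => (∫ t in (0:ℝ)..T, (u₀' t + x.1 * z' t) ^ 2) -
        m * (∫ t in (0:ℝ)..T, |u₀ t + x.1 * z t + x.2| ^ (2 * p / (p - 1))) ^ ((p - 1) / p))
      {x | ∫ t in (0:ℝ)..T, |u₀ t + x.1 * z t + x.2| ^ (2 / (p - 1)) *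
        (u₀ t + x.1 * z t + x.2) = 0} 0 := by
  have hnear : ∀ᶠ x : ℝ × ℝ in 𝓝 0, u₀ t₀ + x.1 * z t₀ + x.2 ≠ 0 :=
    (by fun_prop : Continuous fun x : ℝ × ℝ => u₀ t₀ + x.1 * z t₀ + x.2).continuousAt.eventually_ne
      (by simpa using hut₀)
  filter_upwards [nhdsWithin_le_nhds hnear, self_mem_nhdsWithin] with x hxt₀ hxc
  have hvc : ContinuousOn (fun t => u₀ t + x.1 * z t + x.2) (Icc 0 T) :=
    ((HasDerivWithinAt.continuousOn hderiv).add (continuousOn_const.mul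
      (HasDerivWithinAt.continuousOn hz))).add continuousOn_const
  have hD := integral_abs_rpow_pos (s := 2 * p / (p - 1)) hT
    (div_nonneg (by linarith) (by linarith)) hvc ht₀ hxt₀
  have := hmin (fun t => u₀ t + x.1 * z t + x.2) (fun t => u₀' t + x.1 * z' t)
    (fun t ht => ((hderiv t ht).add ((hz t ht).const_mul x.1)).add_const x.2)
    (hcont.add (continuousOn_const.mul hz')) (by simp only [hbc, hzper]) hxc ⟨t₀, ht₀, hxt₀⟩
  rw [le_div_iff₀ (Real.rpow_pos_of_pos hD _)] at this
  simp only [Prod.fst_zero, Prod.snd_zero, zero_mul, add_zero, ← hm, sub_self]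
  linarith

theorem integral_deriv_mul_eq_of_isMinimizer {T p : ℝ} (hT : 0 < T) (hp : 1 < p)
    {u₀ u₀' : ℝ → ℝ} {m : ℝ}
    (hderiv : ∀ t ∈ Icc (0:ℝ) T, HasDerivWithinAt u₀ (u₀' t) (Icc 0 T) t)
    (hcont : ContinuousOn u₀' (Icc 0 T)) (hbc : u₀ 0 = u₀ T)
    (hconstr : (∫ t in (0:ℝ)..T, |u₀ t| ^ (2 / (p - 1)) * u₀ t) = 0)
    (hne : ∃ t ∈ Icc (0:ℝ) T, u₀ t ≠ 0)
    (hm : m = (∫ t in (0:ℝ)..T, (u₀' t) ^ 2) /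
      (∫ t in (0:ℝ)..T, |u₀ t| ^ (2 * p / (p - 1))) ^ ((p - 1) / p))
    (hmin : ∀ v v' : ℝ → ℝ,
      (∀ t ∈ Icc (0:ℝ) T, HasDerivWithinAt v (v' t) (Icc 0 T) t) →
      ContinuousOn v' (Icc 0 T) → v 0 = v T →
      (∫ t in (0:ℝ)..T, |v t| ^ (2 / (p - 1)) * v t) = 0 →
      (∃ t ∈ Icc (0:ℝ) T, v t ≠ 0) →
      m ≤ (∫ t in (0:ℝ)..T, (v' t) ^ 2) /
        (∫ t in (0:ℝ)..T, |v t| ^ (2 * p / (p - 1))) ^ ((p - 1) / p))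
    {z z' : ℝ → ℝ} (hz : ∀ t ∈ Icc (0:ℝ) T, HasDerivWithinAt z (z' t) (Icc 0 T) t)
    (hz' : ContinuousOn z' (Icc 0 T)) (hzper : z 0 = z T) :
    (∫ t in (0:ℝ)..T, u₀' t * z' t) =
      (m * (∫ t in (0:ℝ)..T, |u₀ t| ^ (2 * p / (p - 1))) ^ (-(1:ℝ) / p)) *
        ∫ t in (0:ℝ)..T, |u₀ t| ^ (2 / (p - 1)) * u₀ t * z t := by
  obtain ⟨t₀, ht₀, hut₀⟩ := hne
  set q := 2 / (p - 1) with hq_def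
  set s := 2 * p / (p - 1) with hs_def
  set r := (p - 1) / p with hr_def
  have hp1 : 0 < p - 1 := by linarith
  have hq : 0 < q := div_pos two_pos hp1
  have hs : s - 2 = q := by rw [hs_def, hq_def]; field_simp; ring
  have hs1 : 1 < s := by rw [hs_def, lt_div_iff₀ (by linarith)]; linarith
  have hu₀c : ContinuousOn u₀ (Icc 0 T) := HasDerivWithinAt.continuousOn hderiv
  have hzc : ContinuousOn z (Icc 0 T) := HasDerivWithinAt.continuousOn hz
  set D := ∫ t in (0:ℝ)..T, |u₀ t| ^ s
  have hD : 0 < D := integral_abs_rpow_pos hT (by linarith) hu₀c ht₀ hut₀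
  have hm' : m * D ^ r = ∫ t in (0:ℝ)..T, (u₀' t) ^ 2 := by
    rw [hm, div_mul_cancel₀ _ (Real.rpow_pos_of_pos hD _).ne']
  have hg := hasStrictFDerivAt_integral_comp_affine (hasDerivAt_abs_rpow_mul_self hq)
    (continuous_const.mul (continuous_abs.rpow_const fun _ => Or.inr hq.le)) hT.le hu₀c hzc
    (continuousOn_const (c := 1))
  simp only [mul_one] at hg
  have hN := hasStrictFDerivAt_integral_comp_affine (K := fun y => y ^ 2) (K' := fun y => 2 * y)
    (fun y => by simpa using hasDerivAt_pow 2 y) (by fun_prop) hT.le hcont hz'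
    (continuousOn_const (c := 0))
  simp only [mul_zero, add_zero, intervalIntegral.integral_zero, zero_smul] at hN
  have hDer := hasStrictFDerivAt_integral_comp_affine (fun y => hasDerivAt_abs_rpow y hs1)
    (by simp only [hs]; fun_prop (discharger := exact hq.le)) hT.le hu₀c hzc
    (continuousOn_const (c := 1))
  simp only [mul_one, hs] at hDer
  have hf := hN.sub (((Real.hasStrictDerivAt_rpow_const (p := r) (Or.inl hD.ne')
    ).comp_hasStrictFDerivAt_of_eq 0 hDer (by simp [D])).const_mul m)
  have hf' := IsLocalExtrOn.eq_zero_of_hasStrictFDerivAt (v := (0, 1))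
    (Or.inl (isLocalMinOn_of_isMinimizer hT hp hderiv hcont hbc ht₀ hut₀ hm' hmin hz hz' hzper))
    hf hg (by simpa using hconstr) ?_ ?_
  · have hrs : r * s = 2 := by rw [hr_def, hs_def]; field_simp
    have hr1 : r - 1 = -1 / p := by rw [hr_def]; field_simp; ring
    have := DFunLike.congr_fun hf' (1, 0)
    simp only [mul_assoc, intervalIntegral.integral_const_mul] at this ⊢
    simp only [hr1, smul_add, sub_apply, smul_apply, coe_fst', smul_eq_mul, mul_one, add_apply,
      coe_snd', mul_zero, add_zero, zero_apply] at this
    linear_combination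
      (this + m * D ^ (-1 / p) * (∫ t in (0:ℝ)..T, |u₀ t| ^ q * (u₀ t * z t)) * hrs) / 2
  · simpa using ⟨by linarith, (integral_abs_rpow_pos hT hq.le hu₀c ht₀ hut₀).ne'⟩
  · simp [mul_assoc, hconstr]

theorem stmt13 (T p : ℝ) (hT : 0 < T) (hp : 1 < p)
    (u₀ u₀' : ℝ → ℝ) (m : ℝ)
    (hderiv : ∀ t ∈ Set.Icc (0:ℝ) T, HasDerivWithinAt u₀ (u₀' t) (Set.Icc 0 T) t)
    (hcont : ContinuousOn u₀' (Set.Icc 0 T))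
    (hbc : u₀ 0 = u₀ T)
    (hconstr : (∫ t in (0:ℝ)..T, |u₀ t| ^ (2 / (p - 1)) * u₀ t) = 0)
    (hne : ∃ t ∈ Set.Icc (0:ℝ) T, u₀ t ≠ 0)
    (hm : m = (∫ t in (0:ℝ)..T, (u₀' t) ^ 2) /
      (∫ t in (0:ℝ)..T, |u₀ t| ^ (2 * p / (p - 1))) ^ ((p - 1) / p))
    (hmin : ∀ v v' : ℝ → ℝ,
      (∀ t ∈ Set.Icc (0:ℝ) T, HasDerivWithinAt v (v' t) (Set.Icc 0 T) t) →
      ContinuousOn v' (Set.Icc 0 T) → v 0 = v T →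
      (∫ t in (0:ℝ)..T, |v t| ^ (2 / (p - 1)) * v t) = 0 →
      (∃ t ∈ Set.Icc (0:ℝ) T, v t ≠ 0) →
      m ≤ (∫ t in (0:ℝ)..T, (v' t) ^ 2) /
        (∫ t in (0:ℝ)..T, |v t| ^ (2 * p / (p - 1))) ^ ((p - 1) / p)) :
    u₀' 0 = u₀' T ∧
    ∀ z z' : ℝ → ℝ,
      (∀ t ∈ Set.Icc (0:ℝ) T, HasDerivWithinAt z (z' t) (Set.Icc 0 T) t) →
      ContinuousOn z' (Set.Icc 0 T) → z 0 = z T →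
      (∫ t in (0:ℝ)..T, u₀' t * z' t) =
        (m * (∫ t in (0:ℝ)..T, |u₀ t| ^ (2 * p / (p - 1))) ^ (-(1:ℝ) / p)) *
          ∫ t in (0:ℝ)..T, |u₀ t| ^ (2 / (p - 1)) * u₀ t * z t := by
  have hEL := fun z z' hz hz' hzper =>
    integral_deriv_mul_eq_of_isMinimizer (z := z) (z' := z') hT hp hderiv hcont hbc hconstr hne
      hm hmin hz hz' hzper
  set A := m * (∫ t in (0:ℝ)..T, |u₀ t| ^ (2 * p / (p - 1))) ^ (-(1:ℝ) / p)
  have hu₀c : ContinuousOn u₀ (Icc 0 T) := HasDerivWithinAt.continuousOn hderiv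
  have hq : 0 ≤ 2 / (p - 1) := div_nonneg zero_le_two (by linarith)
  refine ⟨eq_of_forall_integral_mul_deriv_eq hT hcont
    (g := fun t => A * (|u₀ t| ^ (2 / (p - 1)) * u₀ t))
    (continuousOn_const.mul ((hu₀c.abs.rpow_const fun _ _ => Or.inr hq).mul hu₀c))
    fun z z' hz hz' hzper => ?_, hEL⟩
  rw [hEL z z' hz hz' hzper, ← intervalIntegral.integral_const_mul]
  simp only [mul_assoc]
end
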